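/- arXiv:2004.13190 — 9 statements merged into one kernel-verified Lean document; each statement's English description precedes it below -/
import Mathlib

section
/- Let R be a commutative Noetherian ring of prime characteristic p > 0 and let I be an ideal of R. Then the weak 1-closure of I equals the integral closure of I; that is, x ∈ R satisfies (there exists c ∈ R° with c·x^q ∈ I^q for all sufficiently large powers q of p) if and only if there exists c ∈ R° with c·x^n ∈ I^n for all sufficiently large positive integers n. -/
open Pointwise

/-- `R°`: the set of elements of `R` not contained in any minimal prime of `R`. -/
def RCirc (R : Type*) [CommRing R] : Set R :=
  {c | ∀ P ∈ minimalPrimes R, c ∉ P}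

/-- The `q`-th Frobenius power `I^[q]` of an ideal `I`, generated by `q`-th powers
of elements of `I`. -/
def frobPow {R : Type*} [CommRing R] (I : Ideal R) (q : ℕ) : Ideal R :=
  Ideal.span ((fun f => f ^ q) '' (I : Set R))

/-- The `(s,q)` mixed power `I^(s,q) = I^⌈sq⌉ + I^[q]`. -/
noncomputable def mixedPow {R : Type*} [CommRing R] (I : Ideal R) (s : ℝ) (q : ℕ) : Ideal R :=
  I ^ ⌈s * (q : ℝ)⌉₊ + frobPow I q

/-- The weak `s`-closure of `I`: elements `x` such that there is `c ∈ R°` with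
`c·x^q ∈ I^(s,q)` for all sufficiently large powers `q = p^e` of `p`. -/
def weakCl {R : Type*} [CommRing R] (p : ℕ) (I : Ideal R) (s : ℝ) : Set R :=
  {x | ∃ c ∈ RCirc R, ∃ N : ℕ, ∀ e : ℕ, N ≤ e → c * x ^ p ^ e ∈ mixedPow I s (p ^ e)}

/-- The tight closure `I*` of `I`. -/
def tightCl {R : Type*} [CommRing R] (p : ℕ) (I : Ideal R) : Set R :=
  {x | ∃ c ∈ RCirc R, ∃ N : ℕ, ∀ e : ℕ, N ≤ e → c * x ^ p ^ e ∈ frobPow I (p ^ e)}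

/-- The integral closure of `I`: elements `x` such that there is `c ∈ R°` with
`c·x^n ∈ I^n` for all sufficiently large `n`. -/
def intCl {R : Type*} [CommRing R] (I : Ideal R) : Set R :=
  {x | ∃ c ∈ RCirc R, ∃ N : ℕ, ∀ n : ℕ, N ≤ n → c * x ^ n ∈ I ^ n}

/-- The `α`-th rational power `I_α` of `I`, for rational `α = a/b ≥ 0`:
elements `x` with `x^b` in the integral closure of `I^a`. -/
noncomputable def ratPow {R : Type*} [CommRing R] (I : Ideal R) (α : ℚ) : Set R :=
  {x | x ^ α.den ∈ intCl (I ^ α.num.toNat)}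

/-- `μ(I)`: the minimal number of generators of `I`. -/
noncomputable def mu {R : Type*} [CommRing R] (I : Ideal R) : ℕ :=
  sInf {m : ℕ | ∃ s : Finset R, s.card = m ∧ Ideal.span (s : Set R) = I}

/-- An ideal has positive height if it is not contained in any minimal prime. -/
def PosHeight {R : Type*} [CommRing R] (I : Ideal R) : Prop :=
  ∀ P ∈ minimalPrimes R, ¬ I ≤ P

/-!
If `c x^q ∈ I^q` for all large `q = p^e`, the chain of ideals of the Noetherian Rees algebra
`R[It]` generated by the `c x^q t^q` stabilises, which yields `c · f(x) = 0` for a monic `f` with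
`j`-th coefficient in `Iʲ`. Since `c` avoids every minimal prime, `f(x)` is nilpotent, and a power
of `f` is again such a polynomial, now vanishing at `x`: `x` is integral over `I`, so
`x^(K+n) ∈ Iⁿ` for some `K`.

The elements `d` with `d xⁿ ∈ Iⁿ` for large `n` form an ideal containing `c x^q` for `q ≥ K`,
which avoids the minimal primes not containing `x`, and containing some `u ∉ P` with `u x^s = 0`
for each minimal prime `P ∋ x` (as `x` is nilpotent in `R_P`). By prime avoidance this ideal meets
`R°`. The converse inclusion holds because `I^[q] ⊆ I^q`.
-/

open Filter Polynomial

lemma IsNoetherian.exists_mem_span_image_Iio {R M : Type*} [CommRing R] [AddCommGroup M]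
    [Module R M] [IsNoetherian R M] (f : ℕ → M) :
    ∀ᶠ n in atTop, f n ∈ Submodule.span R (f '' Set.Iio n) := by
  let g : ℕ →o Submodule R M :=
    ⟨fun n => Submodule.span R (f '' Set.Iio n),
      fun _ _ h => Submodule.span_mono (Set.image_mono (Set.Iio_subset_Iio h))⟩
  obtain ⟨n₀, hn₀⟩ := monotone_stabilizes_iff_noetherian.mpr ‹_› g
  refine eventually_atTop.mpr ⟨n₀, fun n hn => ?_⟩
  change f n ∈ g n
  rw [← hn₀ n hn, hn₀ (n + 1) (by omega)]
  exact Submodule.subset_span ⟨n, Set.mem_Iio.mpr n.lt_succ_self, rfl⟩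

lemma Ideal.eventually_exists_eq_sum_mul {R : Type*} [CommRing R] [IsNoetherianRing R]
    (I : Ideal R) {q : ℕ → ℕ} (hq : Monotone q) {a : ℕ → R} (ha : ∀ e, a e ∈ I ^ q e) :
    ∀ᶠ n in atTop, ∃ β : Fin n → R,
      (∀ i : Fin n, β i ∈ I ^ (q n - q i)) ∧ a n = ∑ i : Fin n, β i * a i := by
  let t : ℕ → reesAlgebra I := fun e =>
    ⟨monomial (q e) (a e), reesAlgebra.monomial_mem.mpr (ha e)⟩
  filter_upwards [IsNoetherian.exists_mem_span_image_Iio (R := reesAlgebra I) t] with n hn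
  rw [← Fin.range_val, ← Set.range_comp] at hn
  obtain ⟨b, hb⟩ := (Submodule.mem_span_range_iff_exists_fun _).mp hn
  refine ⟨fun i => (b i : R[X]).coeff (q n - q i),
    fun i => (mem_reesAlgebra_iff I _).mp (b i).2 _, ?_⟩
  have hcoeff := congrArg (fun f : reesAlgebra I => (f : R[X]).coeff (q n)) hb
  simp only [t, smul_eq_mul, AddSubmonoidClass.coe_finsetSum, Subalgebra.coe_mul,
    finsetSum_coeff, coeff_monomial_same, Function.comp_apply] at hcoeff
  rw [← hcoeff]
  refine Finset.sum_congr rfl fun i _ => ?_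
  rw [← coeff_mul_monomial, Nat.sub_add_cancel (hq i.2.le)]

namespace Ideal

variable {R : Type*} [CommRing R]

lemma pow_add_le_pow_mul_pow_of_pow_succ_le {I J : Ideal R} {k : ℕ}
    (h : J ^ (k + 1) ≤ I * J ^ k) (n : ℕ) : J ^ (k + n) ≤ I ^ n * J ^ k := by
  induction n with
  | zero => simp
  | succ n ih =>
    calc J ^ (k + (n + 1)) = J ^ (k + n) * J := by rw [← add_assoc, pow_succ]
      _ ≤ I ^ n * J ^ k * J := mul_le_mul_left ih _
      _ = I ^ n * J ^ (k + 1) := by rw [mul_assoc, pow_succ]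
      _ ≤ I ^ n * (I * J ^ k) := mul_le_mul_right h _
      _ = I ^ (n + 1) * J ^ k := by rw [pow_succ, mul_assoc]

lemma sup_span_singleton_pow_succ_le (I : Ideal R) (x : R) (k : ℕ) :
    (I ⊔ span {x}) ^ (k + 1) ≤ I * (I ⊔ span {x}) ^ k ⊔ span {x ^ (k + 1)} := by
  set J := I ⊔ span {x}
  induction k with
  | zero => simp [J]
  | succ k ih =>
    have hxk : span {x ^ (k + 1)} ≤ J ^ (k + 1) :=
      (span_singleton_le_iff_mem _).mpr
        (pow_mem_pow (mem_sup_right (mem_span_singleton_self x)) _)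
    calc J ^ (k + 1 + 1) = J ^ (k + 1) * J := pow_succ _ _
      _ ≤ (I * J ^ k ⊔ span {x ^ (k + 1)}) * J := mul_le_mul_left ih _
      _ = I * J ^ (k + 1) ⊔ (span {x ^ (k + 1)} * I ⊔ span {x ^ (k + 1 + 1)}) := by
        rw [sup_mul, mul_assoc, ← pow_succ, mul_sup, span_singleton_mul_span_singleton, ← pow_succ]
      _ ≤ I * J ^ (k + 1) ⊔ span {x ^ (k + 1 + 1)} := by
        refine sup_le le_sup_left (sup_le ?_ le_sup_right)
        rw [mul_comm]
        exact le_sup_of_le_left (mul_mono_right hxk)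

lemma pow_add_mem_pow_of_pow_succ_mem {I : Ideal R} {x : R} {k : ℕ}
    (h : x ^ (k + 1) ∈ I * (I ⊔ span {x}) ^ k) (n : ℕ) : x ^ (k + n) ∈ I ^ n := by
  have hred : (I ⊔ span {x}) ^ (k + 1) ≤ I * (I ⊔ span {x}) ^ k :=
    (sup_span_singleton_pow_succ_le I x k).trans
      (sup_le le_rfl ((span_singleton_le_iff_mem _).mpr h))
  have hx : x ^ (k + n) ∈ (I ⊔ span {x}) ^ (k + n) :=
    pow_mem_pow (mem_sup_right (mem_span_singleton_self x)) _
  exact mul_le_left (pow_add_le_pow_mul_pow_of_pow_succ_le hred n hx)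

/-- `u = f(x)` for a monic `f = X^(k+1) + a₁ X^k + ⋯ + a_(k+1)` with `aⱼ ∈ Iʲ`: the ideal
`I (I + (x))^k` is generated by the `aⱼ x^(k+1-j)`. -/
def IsIntegralEquationValue (I : Ideal R) (x : R) (k : ℕ) (u : R) : Prop :=
  x ^ (k + 1) - u ∈ I * (I ⊔ span {x}) ^ k

namespace IsIntegralEquationValue

variable {I : Ideal R} {x : R}

lemma mem_pow_succ {k : ℕ} {u : R} (hu : IsIntegralEquationValue I x k u) :
    u ∈ (I ⊔ span {x}) ^ (k + 1) := by
  have hIJ : I * (I ⊔ span {x}) ^ k ≤ (I ⊔ span {x}) ^ (k + 1) := by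
    rw [pow_succ']; exact mul_mono_left le_sup_left
  simpa using sub_mem (pow_mem_pow (mem_sup_right (mem_span_singleton_self x)) (k + 1)) (hIJ hu)

lemma mul {a b : ℕ} {u v : R} (hu : IsIntegralEquationValue I x a u)
    (hv : IsIntegralEquationValue I x b v) : IsIntegralEquationValue I x (a + b + 1) (u * v) := by
  have hexp : (I ⊔ span {x}) ^ (a + 1) * (I * (I ⊔ span {x}) ^ b) =
      I * (I ⊔ span {x}) ^ (a + b + 1) := by ring
  have hexp' : (I ⊔ span {x}) ^ (b + 1) * (I * (I ⊔ span {x}) ^ a) =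
      I * (I ⊔ span {x}) ^ (a + b + 1) := by ring
  have key : x ^ (a + b + 1 + 1) - u * v =
      x ^ (a + 1) * (x ^ (b + 1) - v) + v * (x ^ (a + 1) - u) := by ring
  rw [IsIntegralEquationValue, key]
  refine add_mem ?_ ?_
  · rw [← hexp]
    exact mul_mem_mul (pow_mem_pow (mem_sup_right (mem_span_singleton_self x)) _) hv
  · rw [← hexp']
    exact mul_mem_mul hv.mem_pow_succ hu

lemma exists_pow_succ {k : ℕ} {u : R} (hu : IsIntegralEquationValue I x k u) (n : ℕ) :
    ∃ K, IsIntegralEquationValue I x K (u ^ (n + 1)) := by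
  induction n with
  | zero => exact ⟨k, by rwa [zero_add, pow_one]⟩
  | succ n ih =>
    obtain ⟨K, hK⟩ := ih
    exact ⟨K + k + 1, by rw [pow_succ]; exact hK.mul hu⟩

lemma exists_pow_succ_mem_of_isNilpotent {k : ℕ} {u : R} (hu : IsIntegralEquationValue I x k u)
    (hnil : IsNilpotent u) : ∃ K, x ^ (K + 1) ∈ I * (I ⊔ span {x}) ^ K := by
  obtain ⟨n, hn⟩ := hnil
  obtain ⟨K, hK⟩ := hu.exists_pow_succ n
  exact ⟨K, by simpa [IsIntegralEquationValue, pow_succ, hn] using hK⟩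

end IsIntegralEquationValue

lemma mul_pow_mem_mul_sup_span_pow {I : Ideal R} {β : R} {m : ℕ} (hβ : β ∈ I ^ (m + 1))
    (x : R) (j : ℕ) : β * x ^ j ∈ I * (I ⊔ span {x}) ^ (m + j) := by
  have hI : I ^ (m + 1) ≤ I * (I ⊔ span {x}) ^ m := by
    rw [pow_succ']; exact mul_mono_right (pow_right_mono le_sup_left m)
  rw [pow_add, ← mul_assoc]
  exact mul_mem_mul (hI hβ) (pow_mem_pow (mem_sup_right (mem_span_singleton_self x)) j)

lemma exists_isIntegralEquationValue_mul_eq_zero [IsNoetherianRing R] {I : Ideal R} {x c : R}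
    {q : ℕ → ℕ} (hq : StrictMono q) (h : ∀ e, c * x ^ q e ∈ I ^ q e) :
    ∃ k u, IsIntegralEquationValue I x k u ∧ c * u = 0 := by
  obtain ⟨n, ⟨β, hβ, hsum⟩, hn⟩ :=
    ((I.eventually_exists_eq_sum_mul hq.monotone h).and (eventually_gt_atTop 0)).exists
  obtain ⟨k, hk⟩ : ∃ k, q n = k + 1 := ⟨q n - 1, by have := hq hn; omega⟩
  refine ⟨k, x ^ q n - ∑ i, β i * x ^ q i, ?_, ?_⟩
  · rw [IsIntegralEquationValue, ← hk, sub_sub_cancel]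
    refine Ideal.sum_mem _ fun i _ => ?_
    obtain ⟨m, hm⟩ : ∃ m, q n - q i = m + 1 := ⟨q n - q i - 1, by have := hq i.2; omega⟩
    have hmk : m + q i = k := by have := hq i.2; omega
    rw [← hmk]
    exact mul_pow_mem_mul_sup_span_pow (hm ▸ hβ i) x (q i)
  · rw [mul_sub, sub_eq_zero, hsum, Finset.mul_sum]
    exact Finset.sum_congr rfl fun i _ => by ring

end Ideal

lemma isNilpotent_of_mem_RCirc_of_mul_eq_zero {R : Type*} [CommRing R] {c u : R}
    (hc : c ∈ RCirc R) (h : c * u = 0) : IsNilpotent u := by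
  have hu : u ∈ sInf (minimalPrimes R) := Ideal.mem_sInf.mpr fun P hP =>
    (hP.1.1.mem_or_mem (h ▸ P.zero_mem)).resolve_left (hc P hP)
  rw [minimalPrimes, Ideal.sInf_minimalPrimes] at hu
  exact mem_nilradical.mp hu

lemma Ideal.exists_mul_pow_eq_zero_of_mem_minimalPrimes {R : Type*} [CommRing R] {P : Ideal R}
    (hP : P ∈ minimalPrimes R) {x : R} (hx : x ∈ P) : ∃ u ∉ P, ∃ s : ℕ, u * x ^ s = 0 := by
  have := hP.1.1
  have := Ring.KrullDimLE.of_isLocalization P hP (Localization.AtPrime P)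
  have hnil : IsNilpotent (algebraMap R (Localization.AtPrime P) x) := by
    rw [← mem_nilradical, Ring.KrullDimLE.nilradical_eq_maximalIdeal,
      IsLocalization.AtPrime.to_map_mem_maximal_iff _ P]
    exact hx
  obtain ⟨s, hs⟩ := hnil
  rw [← map_pow, IsLocalization.map_eq_zero_iff P.primeCompl] at hs
  obtain ⟨⟨u, hu⟩, hus⟩ := hs
  exact ⟨u, hu, s, hus⟩

lemma PosHeight.exists_mem_RCirc {R : Type*} [CommRing R] [IsNoetherianRing R] {L : Ideal R}
    (h : PosHeight L) : ∃ c ∈ L, c ∈ RCirc R := by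
  by_contra! hL
  have hcover : (L : Set R) ⊆ ⋃ P ∈ minimalPrimes R, (P : Set R) := fun c hc => by
    simpa [RCirc] using hL c hc
  obtain ⟨P, hP, hLP⟩ := (Ideal.subset_union_prime_finite
    (minimalPrimes.finite_of_isNoetherianRing R) (f := id) ⊥ ⊥ fun P hP _ _ => hP.1.1).mp hcover
  exact h P hP hLP

section IntegralClosure

variable {R : Type*} [CommRing R] {I : Ideal R} {x : R}

variable (I x) in
def intClWitnesses : Ideal R where
  carrier := {c | ∀ᶠ n in atTop, c * x ^ n ∈ I ^ n}
  add_mem' ha hb := (ha.and hb).mono fun n h => by rw [add_mul]; exact add_mem h.1 h.2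
  zero_mem' := by simp
  smul_mem' r _ hc := hc.mono fun n h => by
    rw [smul_eq_mul, mul_assoc]; exact Ideal.mul_mem_left _ r h

lemma mem_intCl_of_posHeight [IsNoetherianRing R] (h : PosHeight (intClWitnesses I x)) :
    x ∈ intCl I := by
  obtain ⟨c, hcL, hc⟩ := h.exists_mem_RCirc
  exact ⟨c, hc, eventually_atTop.mp hcL⟩

lemma mem_intClWitnesses_of_mul_pow_eq_zero {u : R} {s : ℕ} (h : u * x ^ s = 0) :
    u ∈ intClWitnesses I x := by
  refine eventually_atTop.mpr ⟨s, fun n hn => ?_⟩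
  obtain ⟨j, rfl⟩ := Nat.exists_eq_add_of_le hn
  rw [pow_add x, ← mul_assoc, h, zero_mul]
  exact zero_mem _

lemma mem_intClWitnesses_of_mem_pow {K m : ℕ} {d : R} (hK : ∀ n, x ^ (K + n) ∈ I ^ n)
    (hd : d ∈ I ^ m) (hm : K ≤ m) : d ∈ intClWitnesses I x := by
  refine eventually_atTop.mpr ⟨K, fun n hn => ?_⟩
  obtain ⟨j, rfl⟩ := Nat.exists_eq_add_of_le hn
  have hdx := Ideal.mul_mem_mul hd (hK j)
  rw [← pow_add] at hdx
  exact Ideal.pow_le_pow_right (by omega) hdx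

lemma exists_pow_add_mem_pow_of_mem_RCirc [IsNoetherianRing R] {c : R} (hc : c ∈ RCirc R)
    {q : ℕ → ℕ} (hq : StrictMono q) (h : ∀ e, c * x ^ q e ∈ I ^ q e) :
    ∃ K, ∀ n, x ^ (K + n) ∈ I ^ n := by
  obtain ⟨k, u, hu, hcu⟩ := Ideal.exists_isIntegralEquationValue_mul_eq_zero hq h
  obtain ⟨K, hK⟩ :=
    hu.exists_pow_succ_mem_of_isNilpotent (isNilpotent_of_mem_RCirc_of_mul_eq_zero hc hcu)
  exact ⟨K, Ideal.pow_add_mem_pow_of_pow_succ_mem hK⟩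

end IntegralClosure

lemma mixedPow_one {R : Type*} [CommRing R] (I : Ideal R) (q : ℕ) : mixedPow I 1 q = I ^ q := by
  rw [mixedPow, one_mul, Nat.ceil_natCast, Submodule.add_eq_sup, sup_eq_left, frobPow,
    Ideal.span_le]
  rintro _ ⟨f, hf, rfl⟩
  exact Ideal.pow_mem_pow hf q

theorem stmt1_general {R : Type*} [CommRing R] [IsNoetherianRing R]
    (p : ℕ) (hp : p.Prime) (I : Ideal R) :
    weakCl p I 1 = intCl I := by
  ext x
  simp only [weakCl, mixedPow_one]
  refine ⟨fun ⟨c, hc, N, hN⟩ => ?_, fun ⟨c, hc, N, hN⟩ =>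
    ⟨c, hc, N, fun e he => hN _ (he.trans (Nat.lt_pow_self hp.one_lt).le)⟩⟩
  have hcq : ∀ e, c * x ^ p ^ (N + e) ∈ I ^ p ^ (N + e) := fun e => hN _ (N.le_add_right e)
  obtain ⟨K, hK⟩ := exists_pow_add_mem_pow_of_mem_RCirc hc
    ((pow_right_strictMono₀ hp.one_lt).comp (strictMono_id.const_add N)) hcq
  refine mem_intCl_of_posHeight fun P hP hle => ?_
  by_cases hxP : x ∈ P
  · obtain ⟨u, huP, s, hu⟩ := Ideal.exists_mul_pow_eq_zero_of_mem_minimalPrimes hP hxP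
    exact huP (hle (mem_intClWitnesses_of_mul_pow_eq_zero hu))
  · have hKq : K ≤ p ^ (N + K) := (Nat.le_add_left K N).trans (Nat.lt_pow_self hp.one_lt).le
    rcases hP.1.1.mem_or_mem (hle (mem_intClWitnesses_of_mem_pow hK (hcq K) hKq)) with hcP | hxqP
    · exact hc P hP hcP
    · exact hxP (hP.1.1.mem_of_pow_mem _ hxqP)

/-- the weak 1-closure of `I` equals the integral closure of `I`. -/
theorem stmt1 {R : Type*} [CommRing R] [IsNoetherianRing R]
    (p : ℕ) (hp : p.Prime) (hcp : CharP R p) (I : Ideal R) :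
    weakCl p I 1 = intCl I :=
  stmt1_general p hp I
end

section
/- Let R be a commutative Noetherian ring of prime characteristic p > 0, let I be an ideal of R, and let s ≥ 1 be a real number with s ≥ μ(I). Then the weak s-closure of I equals the tight closure I* of I. -/
open Pointwise

lemma key {R : Type*} [CommRing R] (t : Finset R) (q n : ℕ) (hq : 1 ≤ q)
    (hn : t.card * (q - 1) + 1 ≤ n) :
    (Ideal.span (t : Set R)) ^ n ≤ Ideal.span ((fun f => f ^ q) '' t) := by
  classical
  rw [Ideal.span, Submodule.span_pow]
  apply Submodule.span_le.2
  rintro a ha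
  rw [Set.mem_pow] at ha
  obtain ⟨f, hf⟩ := ha
  rw [List.prod_ofFn] at hf
  have hmem : ∀ i : Fin n, ((f i : R)) ∈ t := fun i => (f i).2
  have hsum : ∑ x ∈ t, (Finset.univ.filter (fun i : Fin n => (f i : R) = x)).card = n := by
    rw [← Finset.card_eq_sum_card_fiberwise (fun i _ => hmem i), Finset.card_univ, Fintype.card_fin]
  have : ∃ x ∈ t, q ≤ (Finset.univ.filter (fun i : Fin n => (f i : R) = x)).card := by
    by_contra h
    push_neg at h
    have : ∑ x ∈ t, (Finset.univ.filter (fun i : Fin n => (f i : R) = x)).card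
        ≤ ∑ _x ∈ t, (q - 1) := by
      refine Finset.sum_le_sum fun x hx => ?_
      have := h x hx
      omega
    simp only [Finset.sum_const, smul_eq_mul] at this
    omega
  obtain ⟨x, hxt, hxq⟩ := this
  have hsplit := Finset.prod_filter_mul_prod_filter_not Finset.univ
    (fun i : Fin n => (f i : R) = x) (fun i => (f i : R))
  have hfil : ∏ i ∈ Finset.univ.filter (fun i : Fin n => (f i : R) = x), (f i : R)
      = x ^ (Finset.univ.filter (fun i : Fin n => (f i : R) = x)).card := by
    rw [Finset.prod_congr rfl (fun i hi => (Finset.mem_filter.1 hi).2), Finset.prod_const]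
  have hxpow : x ^ q ∈ Submodule.span R ((fun f => f ^ q) '' (t : Set R)) :=
    Submodule.subset_span ⟨x, hxt, rfl⟩
  have ha : a = x ^ q * (x ^ ((Finset.univ.filter (fun i : Fin n => (f i : R) = x)).card - q) *
      ∏ i ∈ Finset.univ.filter (fun i : Fin n => ¬ (f i : R) = x), (f i : R)) := by
    rw [← hf, ← hsplit, hfil, ← mul_assoc, ← pow_add]
    congr 2
    omega
  rw [ha, mul_comm]
  exact Submodule.smul_mem _ _ hxpow

/-- if `s ≥ μ(I)` then the weak `s`-closure of `I` equals the tight closure. -/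
theorem stmt2 {R : Type*} [CommRing R] [IsNoetherianRing R]
    (p : ℕ) (hp : p.Prime) (hcp : CharP R p)
    (I : Ideal R) (s : ℝ) (hs1 : 1 ≤ s) (hsmu : (mu I : ℝ) ≤ s) :
    weakCl p I s = tightCl p I := by
  -- I is finitely generated
  obtain ⟨t0, ht0⟩ := (isNoetherian_def.1 ‹IsNoetherianRing R› I)
  have hne : {m : ℕ | ∃ s : Finset R, s.card = m ∧ Ideal.span (s : Set R) = I}.Nonempty :=
    ⟨t0.card, t0, rfl, ht0⟩
  obtain ⟨t, htc, hts⟩ := Nat.sInf_mem hne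
  -- key: I^⌈s q⌉ ≤ frobPow I q for q = p^e
  have hpow : ∀ e : ℕ, I ^ ⌈s * ((p ^ e : ℕ) : ℝ)⌉₊ ≤ frobPow I (p ^ e) := by
    intro e
    set q := p ^ e with hqdef
    have hq1 : 1 ≤ q := Nat.one_le_pow _ _ hp.pos
    have hceil : t.card * (q - 1) + 1 ≤ ⌈s * (q : ℝ)⌉₊ := by
      have hlt : ((t.card * (q - 1) : ℕ) : ℝ) < s * (q : ℝ) := by
        rcases Nat.eq_zero_or_pos t.card with h0 | h1
        · rw [h0]
          push_cast
          have : (1 : ℝ) ≤ (q : ℝ) := by exact_mod_cast hq1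
          nlinarith
        · have hm : (1 : ℝ) ≤ (t.card : ℝ) := by exact_mod_cast h1
          have hms : (t.card : ℝ) ≤ s := htc ▸ hsmu
          have hqc : (((q - 1 : ℕ)) : ℝ) = (q : ℝ) - 1 := by
            push_cast [Nat.cast_sub hq1]; ring
          push_cast [hqc]
          have hq0 : (0 : ℝ) < (q : ℝ) := by exact_mod_cast hq1
          nlinarith
      have := (Nat.lt_ceil).2 hlt
      omega
    have h1 : I ^ ⌈s * (q : ℝ)⌉₊ ≤ Ideal.span ((fun f => f ^ q) '' t) := by
      calc I ^ ⌈s * (q : ℝ)⌉₊ = (Ideal.span (t : Set R)) ^ ⌈s * (q : ℝ)⌉₊ := by rw [hts]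
        _ ≤ _ := key t q _ hq1 hceil
    refine h1.trans (Ideal.span_mono ?_)
    rintro _ ⟨y, hy, rfl⟩
    exact ⟨y, by rw [← hts]; exact Ideal.subset_span hy, rfl⟩
  have hmix : ∀ e : ℕ, mixedPow I s (p ^ e) = frobPow I (p ^ e) := by
    intro e
    unfold mixedPow
    rw [Ideal.add_eq_sup, sup_eq_right.2 (hpow e)]
  ext x
  constructor
  · rintro ⟨c, hc, N, hN⟩
    exact ⟨c, hc, N, fun e he => by rw [← hmix e]; exact hN e he⟩
  · rintro ⟨c, hc, N, hN⟩
    exact ⟨c, hc, N, fun e he => by rw [hmix e]; exact hN e he⟩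
end

section
/- Let R be a commutative Noetherian ring of prime characteristic p > 0, let I be an ideal of R, and let J ⊆ I be a reduction of I, i.e., there exists w ∈ ℕ with I^{w+1} = J·I^w. If s is a real number with s > μ(J), then the weak s-closure of I equals the tight closure I* of I. -/
open Pointwise

/-!
If `J = (f₁, …, f_m)`, a product of `mq + 1` elements of `J` has some `fᵢ` at least `q` times
(pigeonhole), so `J^(mq+1) ⊆ J^[q]`. Since `J` is a reduction,
`I^(w+mq+1) = J^(mq+1) I^w ⊆ J^[q] ⊆ I^[q]`, and for `s > m` and `q ≫ 0` we have
`⌈sq⌉ ≥ w + mq + 1`; hence `I^(s,q) = I^[q]` for all large `q`, and the two closures coincide.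
-/

open Filter

section FrobeniusPower

variable {R : Type*} [CommRing R]

lemma frobPow_mono {I J : Ideal R} (h : I ≤ J) (q : ℕ) : frobPow I q ≤ frobPow J q :=
  Ideal.span_mono (Set.image_mono h)

lemma pow_mem_frobPow {I : Ideal R} {x : R} (hx : x ∈ I) (q : ℕ) : x ^ q ∈ frobPow I q :=
  Ideal.subset_span ⟨x, hx, rfl⟩

lemma span_pow_card_mul_add_one_le_frobPow (T : Finset R) (q : ℕ) :
    Ideal.span (T : Set R) ^ (T.card * q + 1) ≤ frobPow (Ideal.span (T : Set R)) q := by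
  classical
  induction T using Finset.induction_on with
  | empty => simp
  | @insert a T ha ih =>
    rw [Finset.card_insert_of_notMem ha, Finset.coe_insert, Ideal.span_insert,
      show (T.card + 1) * q + 1 = q + (T.card * q + 1) by ring]
    refine Ideal.sup_pow_add_le_pow_sup_pow.trans
      (sup_le ?_ (ih.trans (frobPow_mono le_sup_right q)))
    rw [Ideal.span_singleton_pow, Ideal.span_singleton_le_iff_mem]
    exact pow_mem_frobPow (Ideal.mem_sup_left (Ideal.mem_span_singleton_self a)) q

lemma exists_finset_card_eq_mu {J : Ideal R} (hJ : J.FG) :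
    ∃ T : Finset R, T.card = mu J ∧ Ideal.span (T : Set R) = J := by
  obtain ⟨T, hT⟩ := hJ
  exact Nat.sInf_mem (s := {m | ∃ T : Finset R, T.card = m ∧ Ideal.span (T : Set R) = J})
    ⟨T.card, T, rfl, hT⟩

lemma pow_mu_mul_add_one_le_frobPow {J : Ideal R} (hJ : J.FG) (q : ℕ) :
    J ^ (mu J * q + 1) ≤ frobPow J q := by
  obtain ⟨T, hTcard, rfl⟩ := exists_finset_card_eq_mu hJ
  rw [← hTcard]
  exact span_pow_card_mul_add_one_le_frobPow T q

lemma pow_add_eq_of_reduction {I J : Ideal R} {w : ℕ} (hred : I ^ (w + 1) = J * I ^ w) :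
    ∀ n : ℕ, I ^ (w + n) = J ^ n * I ^ w
  | 0 => by simp
  | n + 1 => by
    rw [← add_assoc, pow_succ, pow_add_eq_of_reduction hred n, mul_assoc, ← pow_succ, hred,
      ← mul_assoc, ← pow_succ]

lemma pow_le_frobPow_of_reduction {I J : Ideal R} (hJ : J.FG) (hJI : J ≤ I) {w : ℕ}
    (hred : I ^ (w + 1) = J * I ^ w) (q : ℕ) : I ^ (w + (mu J * q + 1)) ≤ frobPow I q :=
  calc I ^ (w + (mu J * q + 1)) = J ^ (mu J * q + 1) * I ^ w := pow_add_eq_of_reduction hred _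
    _ ≤ J ^ (mu J * q + 1) := Ideal.mul_le_left
    _ ≤ frobPow J q := pow_mu_mul_add_one_le_frobPow hJ q
    _ ≤ frobPow I q := frobPow_mono hJI q

lemma tightCl_subset_weakCl (p : ℕ) (I : Ideal R) (s : ℝ) : tightCl p I ⊆ weakCl p I s :=
  fun _ ⟨c, hc, N, h⟩ ↦ ⟨c, hc, N, fun e he ↦ Ideal.mem_sup_right (h e he)⟩

lemma weakCl_subset_tightCl_of_eventually {p : ℕ} {I : Ideal R} {s : ℝ}
    (h : ∀ᶠ e in atTop, I ^ ⌈s * (p ^ e : ℕ)⌉₊ ≤ frobPow I (p ^ e)) :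
    weakCl p I s ⊆ tightCl p I := by
  rintro x ⟨c, hc, N, hx⟩
  obtain ⟨M, hM⟩ := eventually_atTop.mp h
  exact ⟨c, hc, max N M, fun e he ↦
    sup_le (hM e (le_of_max_le_right he)) le_rfl (hx e (le_of_max_le_left he))⟩

end FrobeniusPower

lemma eventually_add_mul_add_one_le_ceil_mul (w m : ℕ) {s : ℝ} (hs : (m : ℝ) < s) :
    ∀ᶠ q : ℕ in atTop, w + (m * q + 1) ≤ ⌈s * q⌉₊ := by
  have hgrow : Tendsto (fun q : ℕ ↦ (s - m) * q) atTop atTop :=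
    tendsto_natCast_atTop_atTop.const_mul_atTop (sub_pos.mpr hs)
  filter_upwards [hgrow.eventually_ge_atTop ((w : ℝ) + 1)] with q hq
  have : ((w + (m * q + 1) : ℕ) : ℝ) ≤ s * q := by push_cast; linarith
  exact_mod_cast this.trans (Nat.le_ceil _)

theorem stmt3_general {R : Type*} [CommRing R] [IsNoetherianRing R]
    (p : ℕ) (hp : p.Prime)
    (I J : Ideal R) (hJI : J ≤ I) (w : ℕ) (hred : I ^ (w + 1) = J * I ^ w)
    (s : ℝ) (hs : (mu J : ℝ) < s) :
    weakCl p I s = tightCl p I := by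
  refine (weakCl_subset_tightCl_of_eventually ?_).antisymm (tightCl_subset_weakCl p I s)
  have hq : Tendsto (fun e : ℕ ↦ p ^ e) atTop atTop :=
    tendsto_pow_atTop_atTop_of_one_lt hp.one_lt
  filter_upwards [hq.eventually (eventually_add_mul_add_one_le_ceil_mul w (mu J) hs)] with e he
  exact (Ideal.pow_le_pow_right he).trans
    (pow_le_frobPow_of_reduction (IsNoetherian.noetherian J) hJI hred _)

/-- if `J ⊆ I` is a reduction of `I` (i.e. `I^{w+1} = J·I^w` for some `w`)
and `s > μ(J)`, then the weak `s`-closure of `I` equals the tight closure of `I`. -/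
theorem stmt3 {R : Type*} [CommRing R] [IsNoetherianRing R]
    (p : ℕ) (hp : p.Prime) (hcp : CharP R p)
    (I J : Ideal R) (hJI : J ≤ I) (w : ℕ) (hred : I ^ (w + 1) = J * I ^ w)
    (s : ℝ) (hs : (mu J : ℝ) < s) :
    weakCl p I s = tightCl p I :=
  stmt3_general p hp I J hJI w hred s hs
end

section
/- Let R be a commutative Noetherian ring, let I be an ideal of R of positive height, let α ≥ 0 be a rational number, and let x ∈ I_α. Then there exists c ∈ R° such that c·x^n ∈ I^⌈αn⌉ for all sufficiently large positive integers n. -/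
open Pointwise

/-- if `I` has positive height, `α ≥ 0` is rational and `x ∈ I_α`, then
there is `c ∈ R°` with `c·x^n ∈ I^⌈αn⌉` for all sufficiently large `n`. -/
theorem stmt4 {R : Type*} [CommRing R] [IsNoetherianRing R]
    (I : Ideal R) (hI : PosHeight I) (α : ℚ) (hα : 0 ≤ α)
    (x : R) (hx : x ∈ ratPow I α) :
    ∃ c ∈ RCirc R, ∃ N : ℕ, ∀ n : ℕ, N ≤ n → c * x ^ n ∈ I ^ ⌈α * (n : ℚ)⌉₊ := by
  obtain ⟨c, hc, N, hcN⟩ := hx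
  set a := α.num.toNat with ha
  set b := α.den with hb
  have hbpos : 0 < b := α.pos
  -- find d ∈ I avoiding all minimal primes
  have hfin : (minimalPrimes R).Finite := minimalPrimes.finite_of_isNoetherianRing R
  obtain ⟨d, hdI, hd⟩ : ∃ d ∈ I, ∀ P ∈ minimalPrimes R, d ∉ P := by
    by_contra h
    push_neg at h
    have hsub : (I : Set R) ⊆ ⋃ P ∈ hfin.toFinset, (P : Set R) := by
      intro y hy
      obtain ⟨P, hP, hyP⟩ := h y hy
      exact Set.mem_biUnion (hfin.mem_toFinset.mpr hP) hyP
    have := (Ideal.subset_union_prime (⊥ : Ideal R) ⊥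
      (fun P hP _ _ => (hfin.mem_toFinset.mp hP).1.1)).mp hsub
    obtain ⟨P, hP, hIP⟩ := this
    exact hI P (hfin.mem_toFinset.mp hP) hIP
  refine ⟨c * d ^ a, ?_, b * N + b, ?_⟩
  · intro P hP
    have hprime : P.IsPrime := hP.1.1
    intro hmem
    rcases hprime.mem_or_mem hmem with h1 | h1
    · exact hc P hP h1
    · exact hd P hP (hprime.mem_of_pow_mem a h1)
  · intro n hn
    set m := n / b with hm
    have hmN : N ≤ m := by
      rw [hm, Nat.le_div_iff_mul_le hbpos]
      calc N * b = b * N := Nat.mul_comm _ _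
        _ ≤ b * N + b := Nat.le_add_right _ _
        _ ≤ n := hn
    have hmem1 : c * (x ^ b) ^ m ∈ (I ^ a) ^ m := hcN m hmN
    -- decompose n = b*m + r
    have hdecomp : b * m + n % b = n := Nat.div_add_mod n b
    have hr : n % b < b := Nat.mod_lt _ hbpos
    -- the element belongs to I ^ (a * m + a)
    have key : c * d ^ a * x ^ n ∈ I ^ (a * m + a) := by
      have hx : x ^ n = (x ^ b) ^ m * x ^ (n % b) := by
        rw [← pow_mul, ← pow_add, hdecomp]
      have : c * d ^ a * x ^ n = (c * (x ^ b) ^ m) * d ^ a * x ^ (n % b) := by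
        rw [hx]; ring
      rw [this, pow_add]
      refine Ideal.mul_mem_right _ _ (Ideal.mul_mem_mul ?_ ?_)
      · rw [pow_mul]; exact hmem1
      · exact Ideal.pow_mem_pow hdI a
    refine Ideal.pow_le_pow_right ?_ key
    -- ⌈α n⌉ ≤ a*m + a
    rw [Nat.ceil_le]
    have hnum : (a : ℚ) = α * b := by
      rw [ha, hb]
      have h1 : ((α.num.toNat : ℤ) : ℚ) = (α.num : ℚ) := by
        exact_mod_cast congrArg (Int.cast : ℤ → ℚ) (Int.toNat_of_nonneg (Rat.num_nonneg.mpr hα))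
      push_cast at h1 ⊢
      rw [h1, Rat.mul_den_eq_num]
    have hnle : (n : ℚ) ≤ (b : ℚ) * (m + 1) := by
      have : n < b * (m + 1) := by
        calc n = b * m + n % b := hdecomp.symm
          _ < b * m + b := by omega
          _ = b * (m + 1) := by ring
      exact_mod_cast this.le
    calc α * (n : ℚ) ≤ α * ((b : ℚ) * (m + 1)) := by
          exact mul_le_mul_of_nonneg_left hnle hα
      _ = (a : ℚ) * (m + 1) := by rw [hnum]; ring
      _ = ((a * m + a : ℕ) : ℚ) := by push_cast; ring
end

section
/- Let R be a commutative Noetherian ring of prime characteristic p > 0 graded by ℕ^n, let I be a nonzero homogeneous ideal of R, let s ≥ 1 be a real number, and let δ = (δ_1, …, δ_n) ∈ ℕ^n where δ_i is the minimum of the i-th coordinate of deg f over all nonzero homogeneous f ∈ I. If x is a homogeneous element lying in the weak s-closure of I but not in the tight closure I*, then deg x ≥ s·δ (i.e., each coordinate of deg x is at least s times the corresponding coordinate of δ). -/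
/-!
Fix a coordinate `i` and let `φ` be the `i`-th coordinate of the degree. The components of the
elements of `I` have `φ`-degree at least `δ i`, so those of the elements of `I ^ m` have
`φ`-degree at least `m * δ i`. If `c * x ^ q ∈ I ^ ⌈s q⌉ + I^[q]` but `c * x ^ q ∉ I^[q]`, then,
`I^[q]` being homogeneous, some component of `c * x ^ q` is a nonzero component of an element of
`I ^ ⌈s q⌉`; its `φ`-degree is thus at least `⌈s q⌉ * δ i` and at most `G + q * gx i`, where `G`
bounds the `φ`-degrees of the components of `c`. As `x ∉ I*`, this happens for arbitrarily large
`q`, which forces `s * δ i ≤ gx i`.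
-/

open Pointwise

namespace DirectSum

variable {ι σ A : Type*} [DecidableEq ι] [AddMonoid ι] [Semiring A] [SetLike σ A]
  [AddSubmonoidClass σ A] (𝒜 : ι → σ) [GradedRing 𝒜]

theorem exists_add_eq_of_decompose_mul_ne_zero {a b : A} {n : ι}
    (h : (decompose 𝒜 (a * b) n : A) ≠ 0) :
    ∃ i j, i + j = n ∧ (decompose 𝒜 a i : A) ≠ 0 ∧ (decompose 𝒜 b j : A) ≠ 0 := by
  classical
  rw [decompose_mul, coe_mul_apply] at h
  obtain ⟨⟨i, j⟩, hij, -⟩ := Finset.exists_ne_zero_of_sum_ne_zero h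
  simp only [Finset.mem_filter, Finset.mem_product, DFinsupp.mem_support_iff] at hij
  exact ⟨i, j, hij.2, fun h0 => hij.1.1 (Subtype.ext h0), fun h0 => hij.1.2 (Subtype.ext h0)⟩

theorem eq_of_decompose_ne_zero {a : A} {i j : ι} (ha : a ∈ 𝒜 i)
    (h : (decompose 𝒜 a j : A) ≠ 0) : j = i := by
  by_contra hji
  exact h (decompose_of_mem_ne 𝒜 ha (Ne.symm hji))

end DirectSum

section DegreeGe

variable {ι σ A : Type*} [DecidableEq ι] [AddMonoid ι] [CommSemiring A] [SetLike σ A]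
  [AddSubmonoidClass σ A] (𝒜 : ι → σ) [GradedRing 𝒜]

open DirectSum

def degreeGeIdeal (φ : ι →+ ℕ) (t : ℕ) : Ideal A where
  carrier := {y | ∀ d, (decompose 𝒜 y d : A) ≠ 0 → t ≤ φ d}
  zero_mem' d h := by simp at h
  add_mem' {a b} ha hb d h := by
    rw [decompose_add, DirectSum.add_apply, AddMemClass.coe_add] at h
    by_cases had : (decompose 𝒜 a d : A) = 0
    · exact hb d (by rwa [had, zero_add] at h)
    · exact ha d had
  smul_mem' r y hy d h := by
    obtain ⟨i, j, rfl, -, hj⟩ := exists_add_eq_of_decompose_mul_ne_zero 𝒜 h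
    rw [map_add]
    exact (hy j hj).trans (Nat.le_add_left _ _)

variable {𝒜}

theorem Ideal.IsHomogeneous.le_degreeGeIdeal {I : Ideal A} (hI : I.IsHomogeneous 𝒜)
    {φ : ι →+ ℕ} {t : ℕ} (h : ∀ f ∈ I, f ≠ 0 → ∀ d, f ∈ 𝒜 d → t ≤ φ d) :
    I ≤ degreeGeIdeal 𝒜 φ t :=
  fun _ hf d hd => h _ (hI d hf) hd d (SetLike.coe_mem _)

theorem degreeGeIdeal_mul_le (φ : ι →+ ℕ) (t u : ℕ) :
    degreeGeIdeal 𝒜 φ t * degreeGeIdeal 𝒜 φ u ≤ degreeGeIdeal 𝒜 φ (t + u) := by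
  refine Ideal.mul_le.2 fun a ha b hb d h => ?_
  obtain ⟨i, j, rfl, hi, hj⟩ := exists_add_eq_of_decompose_mul_ne_zero 𝒜 h
  rw [map_add]
  exact Nat.add_le_add (ha i hi) (hb j hj)

theorem pow_le_degreeGeIdeal {I : Ideal A} {φ : ι →+ ℕ} {t : ℕ}
    (hI : I ≤ degreeGeIdeal 𝒜 φ t) : ∀ m : ℕ, I ^ m ≤ degreeGeIdeal 𝒜 φ (m * t)
  | 0 => by
    rw [pow_zero, Ideal.one_eq_top, zero_mul]
    exact fun _ _ _ _ => Nat.zero_le _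
  | m + 1 => by
    rw [pow_succ, Nat.succ_mul]
    exact (Ideal.mul_mono (pow_le_degreeGeIdeal hI m) hI).trans (degreeGeIdeal_mul_le φ _ _)

theorem Ideal.IsHomogeneous.map_of_isHomogeneousElem {I : Ideal A} (hI : I.IsHomogeneous 𝒜)
    (f : A →+* A) (hf : ∀ a, SetLike.IsHomogeneousElem 𝒜 a → SetLike.IsHomogeneousElem 𝒜 (f a)) :
    (I.map f).IsHomogeneous 𝒜 := by
  obtain ⟨S, rfl⟩ := (Ideal.IsHomogeneous.iff_exists 𝒜 I).1 hI
  rw [Ideal.map_span]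
  refine Ideal.homogeneous_span 𝒜 _ ?_
  rintro _ ⟨_, ⟨a, -, rfl⟩, rfl⟩
  exact hf _ a.2

theorem exists_decompose_ne_zero_of_mem_sup_of_notMem {J K : Ideal A} (hK : K.IsHomogeneous 𝒜)
    {y : A} (hy : y ∈ J ⊔ K) (hyK : y ∉ K) :
    ∃ u ∈ J, ∃ d, (decompose 𝒜 y d : A) ≠ 0 ∧ (decompose 𝒜 u d : A) ≠ 0 := by
  classical
  obtain ⟨u, hu, v, hv, rfl⟩ := Submodule.mem_sup.1 hy
  obtain ⟨d, hd⟩ : ∃ d, (decompose 𝒜 (u + v) d : A) ∉ K := by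
    by_contra! h
    rw [← sum_support_decompose 𝒜 (u + v)] at hyK
    exact hyK (Ideal.sum_mem _ fun d _ => h d)
  have hud : (decompose 𝒜 u d : A) ∉ K := by
    rw [decompose_add, DirectSum.add_apply, AddMemClass.coe_add] at hd
    exact fun h => hd (K.add_mem h (hK d hv))
  exact ⟨u, hu, d, fun h => hd (h ▸ K.zero_mem), fun h => hud (h ▸ K.zero_mem)⟩

theorem exists_forall_decompose_ne_zero_le (φ : ι → ℕ) (c : A) :
    ∃ G, ∀ k, (decompose 𝒜 c k : A) ≠ 0 → φ k ≤ G := by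
  classical
  exact ⟨(decompose 𝒜 c).support.sup φ, fun k hk =>
    Finset.le_sup (DFinsupp.mem_support_iff.2 fun h => hk (by simp [h]))⟩

theorem exists_decompose_ne_zero_mul_le_of_mul_pow_mem_pow_sup {I K : Ideal A}
    {φ : ι →+ ℕ} {δ : ℕ} (hIδ : I ≤ degreeGeIdeal 𝒜 φ δ) (hK : K.IsHomogeneous 𝒜)
    {c x : A} {g : ι} (hx : x ∈ 𝒜 g) {m q : ℕ} (hmem : c * x ^ q ∈ I ^ m ⊔ K)
    (hnot : c * x ^ q ∉ K) :
    ∃ k, (decompose 𝒜 c k : A) ≠ 0 ∧ m * δ ≤ φ k + q * φ g := by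
  obtain ⟨u, hu, d, hd, hud⟩ := exists_decompose_ne_zero_of_mem_sup_of_notMem hK hmem hnot
  obtain ⟨k, j, rfl, hk, hj⟩ := exists_add_eq_of_decompose_mul_ne_zero 𝒜 hd
  obtain rfl := eq_of_decompose_ne_zero 𝒜 (SetLike.pow_mem_graded q hx) hj
  refine ⟨k, hk, ?_⟩
  simpa only [map_add, map_nsmul, smul_eq_mul] using pow_le_degreeGeIdeal hIδ m hu _ hud

end DegreeGe

theorem frobPow_eq_map_iterateFrobenius {A : Type*} [CommRing A] (p e : ℕ) [ExpChar A p]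
    (I : Ideal A) : frobPow I (p ^ e) = I.map (iterateFrobenius A p e) :=
  rfl

theorem Ideal.IsHomogeneous.frobPow {ι σ A : Type*} [DecidableEq ι] [AddMonoid ι] [CommRing A]
    [SetLike σ A] [AddSubmonoidClass σ A] {𝒜 : ι → σ} [GradedRing 𝒜] {I : Ideal A}
    (hI : I.IsHomogeneous 𝒜) (p e : ℕ) [ExpChar A p] :
    (_root_.frobPow I (p ^ e)).IsHomogeneous 𝒜 := by
  rw [frobPow_eq_map_iterateFrobenius]
  exact hI.map_of_isHomogeneousElem _ fun _ ⟨i, ha⟩ => ⟨p ^ e • i, SetLike.pow_mem_graded _ ha⟩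

theorem nonpos_of_forall_exists_pow_mul_le {r a G : ℝ} (hr : 1 < r)
    (h : ∀ M : ℕ, ∃ e ≥ M, r ^ e * a ≤ G) : a ≤ 0 := by
  by_contra! ha
  obtain ⟨M, hM⟩ := pow_unbounded_of_one_lt (G / a) hr
  obtain ⟨e, he, hle⟩ := h M
  have hMe : r ^ M ≤ r ^ e := pow_le_pow_right₀ hr.le he
  rw [div_lt_iff₀ ha] at hM
  nlinarith

theorem stmt8_general {R : Type*} {n : ℕ} [CommRing R]
    (p : ℕ) (hp : p.Prime) (hcp : CharP R p)
    (𝒜 : (Fin n → ℕ) → AddSubgroup R) [GradedRing 𝒜]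
    (I : Ideal R) (hI : I.IsHomogeneous 𝒜) (s : ℝ)
    (δ : Fin n → ℕ)
    (hδ : ∀ i, δ i = sInf {d : ℕ | ∃ f ∈ I, f ≠ 0 ∧ ∃ g : Fin n → ℕ, f ∈ 𝒜 g ∧ g i = d})
    (x : R) (gx : Fin n → ℕ) (hx : x ∈ 𝒜 gx)
    (hxw : x ∈ weakCl p I s) (hxt : x ∉ tightCl p I) :
    ∀ i, s * (δ i : ℝ) ≤ (gx i : ℝ) := by
  intro i
  have : Fact p.Prime := ⟨hp⟩
  let φ := Pi.evalAddMonoidHom (fun _ : Fin n => ℕ) i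
  have hIδ : I ≤ degreeGeIdeal 𝒜 φ (δ i) := hI.le_degreeGeIdeal fun f hf hf0 d hd =>
    hδ i ▸ Nat.sInf_le ⟨f, hf, hf0, d, hd, rfl⟩
  obtain ⟨c, hc, N, hcN⟩ := hxw
  obtain ⟨G, hG⟩ := exists_forall_decompose_ne_zero_le (𝒜 := 𝒜) φ c
  suffices ∀ M : ℕ, ∃ e ≥ M, (p : ℝ) ^ e * (s * δ i - gx i) ≤ G by
    linarith [nonpos_of_forall_exists_pow_mul_le (by exact_mod_cast hp.one_lt) this]
  intro M
  obtain ⟨e, he, hnot⟩ : ∃ e ≥ max N M, c * x ^ p ^ e ∉ frobPow I (p ^ e) := by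
    by_contra! h
    exact hxt ⟨c, hc, _, h⟩
  obtain ⟨k, hk, hle⟩ := exists_decompose_ne_zero_mul_le_of_mul_pow_mem_pow_sup hIδ
    (hI.frobPow p e) hx (hcN e (le_of_max_le_left he)) hnot
  refine ⟨e, le_of_max_le_right he, ?_⟩
  have hceil := Nat.le_ceil (s * ((p ^ e : ℕ) : ℝ))
  have hdeg : (⌈s * ((p ^ e : ℕ) : ℝ)⌉₊ : ℝ) * δ i ≤ G + (p ^ e : ℕ) * gx i := by
    exact_mod_cast hle.trans (Nat.add_le_add_right (hG k hk) _)
  push_cast at hceil hdeg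
  nlinarith [mul_le_mul_of_nonneg_right hceil (Nat.cast_nonneg (δ i) : (0 : ℝ) ≤ δ i)]

/-- in an `ℕⁿ`-graded ring, if `x` is homogeneous of degree `gx`, lies in the
weak `s`-closure of a nonzero homogeneous ideal `I` but not in its tight closure, then
`deg x ≥ s·δ` coordinatewise, where `δ_i` is the minimal `i`-th coordinate of the degree of
a nonzero homogeneous element of `I`. -/
theorem stmt8 {R : Type*} {n : ℕ} [CommRing R] [IsNoetherianRing R]
    (p : ℕ) (hp : p.Prime) (hcp : CharP R p)
    (𝒜 : (Fin n → ℕ) → AddSubgroup R) [GradedRing 𝒜]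
    (I : Ideal R) (hI : I.IsHomogeneous 𝒜) (hI0 : I ≠ ⊥) (s : ℝ) (hs : 1 ≤ s)
    (δ : Fin n → ℕ)
    (hδ : ∀ i, δ i = sInf {d : ℕ | ∃ f ∈ I, f ≠ 0 ∧ ∃ g : Fin n → ℕ, f ∈ 𝒜 g ∧ g i = d})
    (x : R) (gx : Fin n → ℕ) (hx : x ∈ 𝒜 gx)
    (hxw : x ∈ weakCl p I s) (hxt : x ∉ tightCl p I) :
    ∀ i, s * (δ i : ℝ) ≤ (gx i : ℝ) :=
  stmt8_general p hp hcp 𝒜 I hI s δ hδ x gx hx hxw hxt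
end

section
/- Let k be a field of characteristic p > 0, let R be an ℕ^n-graded finitely generated k-algebra that is graded local with homogeneous maximal ideal 𝔪, let I be an 𝔪-primary homogeneous ideal generated by homogeneous elements each of degree at most δ ∈ ℕ^n (coordinatewise), and let s ≥ 1 be a real number. If x ∈ R is a homogeneous element with deg x ≠ (0,…,0) and deg x ≥ s·δ (coordinatewise), then x belongs to the weak s-closure of I. -/
open Pointwise

/-!
Homogeneous elements of positive degree lie in `𝔪`, and `I` contains a power of `𝔪`; as `R` is
generated by finitely many homogeneous elements, every homogeneous element of total degree at
least some `C` lies in `I`. Splitting off one generator of `I` (of total degree `≤ Δ = ∑ δ i`) at a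
time, a homogeneous element of total degree `≥ C + mΔ` lies in `I ^ (m + 1)`; so `x ^ q`, of total
degree `q ∑ gx i ≥ s q Δ`, lies in `I ^ (⌈s q⌉ - C - 1)`. The missing `I ^ (C + 1)` is supplied by a
test element `c = b + a ∈ R°` with `b ∈ I ^ (C + 1)` and `a` killing a power of `𝔪` (found by
prime avoidance; `a ≠ 0` is needed only when `𝔪` is a minimal prime), so `c x^q = b x^q`.
-/

section Noetherian

variable {R : Type*} [CommRing R] [IsNoetherianRing R]

theorem exists_mem_rCirc_of_posHeight {J : Ideal R} (hJ : PosHeight J) : ∃ c ∈ J, c ∈ RCirc R := by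
  by_contra! h
  have hcover : (J : Set R) ⊆ ⋃ P ∈ minimalPrimes R, (P : Set R) := fun c hc => by
    simpa [RCirc] using h c hc
  obtain ⟨P, hP, hJP⟩ := (Ideal.subset_union_prime_finite
    (minimalPrimes.finite_of_isNoetherianRing R) (f := id) ⊥ ⊥ fun P hP _ _ => hP.1.1).mp hcover
  exact hJ P hP hJP

theorem exists_pow_mul_eq_bot_of_mem_minimalPrimes {P : Ideal R} (hP : P ∈ minimalPrimes R) :
    ∃ n, ∃ J : Ideal R, P ^ n * J = ⊥ ∧ ¬ J ≤ P := by
  classical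
  have hfin := minimalPrimes.finite_of_isNoetherianRing R
  obtain ⟨n, hn⟩ := IsNoetherianRing.isNilpotent_nilradical R
  set J := (hfin.toFinset.erase P).inf id
  have hPJ : P ⊓ J = nilradical R := by
    rw [show nilradical R = sInf (minimalPrimes R) from Ideal.sInf_minimalPrimes.symm,
      ← hfin.coe_toFinset, ← Finset.inf_id_eq_sInf,
      ← Finset.insert_erase (hfin.mem_toFinset.mpr hP), Finset.inf_insert, id_eq]
  refine ⟨n, J ^ n, le_bot_iff.mp ?_, fun hJP => ?_⟩
  · calc P ^ n * J ^ n = (P * J) ^ n := (mul_pow P J n).symm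
      _ ≤ nilradical R ^ n := Ideal.pow_right_mono (hPJ ▸ Ideal.mul_le_inf) n
      _ = ⊥ := hn
  · obtain ⟨Q, hQ, hQP⟩ := (hP.isPrime.inf_le').mp (hP.isPrime.le_of_pow_le hJP)
    obtain ⟨hQP', hQmin⟩ := Finset.mem_erase.mp hQ
    exact hQP' (le_antisymm hQP (hP.2 (hfin.mem_toFinset.mp hQmin).1 hQP))

theorem exists_mem_rCirc_mul_eq_mul {𝔪 I : Ideal R} (h𝔪 : 𝔪.IsMaximal) (hI : I.radical = 𝔪) :
    ∃ c ∈ RCirc R, ∃ b ∈ I, ∃ N, ∀ z ∈ 𝔪 ^ N, c * z = b * z := by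
  obtain ⟨N, K, hKN, hK⟩ : ∃ N, ∃ K : Ideal R, 𝔪 ^ N * K = ⊥ ∧
      (𝔪 ∈ minimalPrimes R → ¬ K ≤ 𝔪) := by
    by_cases h𝔪 : 𝔪 ∈ minimalPrimes R
    · obtain ⟨N, K, hKN, hK⟩ := exists_pow_mul_eq_bot_of_mem_minimalPrimes h𝔪
      exact ⟨N, K, hKN, fun _ => hK⟩
    · exact ⟨0, ⊥, Ideal.mul_bot _, fun h => absurd h h𝔪⟩
  have hIK : PosHeight (I ⊔ K) := fun P hP hle => by
    have hP𝔪 : 𝔪 = P := (h𝔪.eq_of_le hP.1.1.ne_top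
      (hI ▸ hP.1.1.radical_le_iff.mpr (le_sup_left.trans hle)))
    subst hP𝔪
    exact hK hP (le_sup_right.trans hle)
  obtain ⟨c, hc, hcR⟩ := exists_mem_rCirc_of_posHeight hIK
  obtain ⟨b, hb, a, ha, rfl⟩ := Submodule.mem_sup.mp hc
  refine ⟨b + a, hcR, b, hb, N, fun z hz => ?_⟩
  have haz : z * a = 0 := by
    simpa [hKN] using Ideal.mul_mem_mul hz ha
  rw [add_mul, mul_comm a, haz, add_zero]

end Noetherian

section Graded

variable {R k : Type*} [CommRing R] [CommSemiring k] [Algebra k R]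

open DirectSum

theorem Ideal.IsHomogeneous.mem_of_mem_graded_of_ne_zero {ι σ : Type*} [DecidableEq ι]
    [AddCommMonoid ι] [PartialOrder ι] [CanonicallyOrderedAdd ι] [SetLike σ R]
    [AddSubmonoidClass σ R] {𝒜 : ι → σ} [GradedRing 𝒜] {𝔪 : Ideal R}
    (h𝔪 : 𝔪.IsHomogeneous 𝒜) (h𝔪max : 𝔪.IsMaximal) {i : ι} (hi : i ≠ 0) {y : R}
    (hy : y ∈ 𝒜 i) : y ∈ 𝔪 := by
  by_contra hy𝔪
  obtain ⟨z, m, hm, hzm⟩ := h𝔪max.exists_inv hy𝔪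
  have hy0 : GradedRing.projZeroRingHom 𝒜 y = 0 := by
    rw [GradedRing.projZeroRingHom_apply, decompose_of_mem_ne 𝒜 hy hi]
  have hm1 : GradedRing.projZeroRingHom 𝒜 m = 1 := by
    rw [← map_one (GradedRing.projZeroRingHom 𝒜), ← hzm, map_add, map_mul, hy0, mul_zero,
      zero_add]
  exact h𝔪max.ne_top ((Ideal.eq_top_iff_one _).mpr (hm1 ▸ h𝔪 0 hm))

variable {n : ℕ} (𝒜 : (Fin n → ℕ) → Submodule k R) [GradedAlgebra 𝒜]

theorem Algebra.FiniteType.exists_homogeneous_adjoin_eq_top (hfg : Algebra.FiniteType k R) :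
    ∃ T : Set R, Algebra.adjoin k T = ⊤ ∧ ∃ D, ∀ w ∈ T, ∃ d, w ∈ 𝒜 d ∧ ∑ i, d i ≤ D := by
  classical
  obtain ⟨S, hS⟩ := hfg.out
  let P := S.sigma fun y => (decompose 𝒜 y).support
  refine ⟨(fun a : (_ : R) × (Fin n → ℕ) => (decompose 𝒜 a.1 a.2 : R)) '' P, ?_,
    P.sup fun a => ∑ i, a.2 i, ?_⟩
  · refine top_le_iff.mp (hS ▸ Algebra.adjoin_le fun y hy => ?_)
    rw [← sum_support_decompose 𝒜 y]
    exact Subalgebra.sum_mem _ fun d hd =>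
      Algebra.subset_adjoin ⟨⟨y, d⟩, Finset.mem_sigma.mpr ⟨hy, hd⟩, rfl⟩
  · rintro _ ⟨a, ha, rfl⟩
    exact ⟨a.2, SetLike.coe_mem _, Finset.le_sup (f := fun a => ∑ i, a.2 i) ha⟩

theorem mem_pow_of_mul_le_sum {𝔪 : Ideal R} (h𝔪 : 𝔪.IsHomogeneous 𝒜) (h𝔪max : 𝔪.IsMaximal)
    {T : Set R} (hT : Algebra.adjoin k T = ⊤) {D : ℕ} (hD : 0 < D)
    (hTdeg : ∀ w ∈ T, ∃ d, w ∈ 𝒜 d ∧ ∑ i, d i ≤ D) {g : Fin n → ℕ} {y : R} (hy : y ∈ 𝒜 g)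
    {t : ℕ} (ht : t * D ≤ ∑ i, g i) : y ∈ 𝔪 ^ t := by
  classical
  -- a monomial in `T` with `j` factors of positive degree lies in `𝔪 ^ j`
  have hmono : ∀ w ∈ Submonoid.closure T,
      ∃ d j, w ∈ 𝒜 d ∧ w ∈ 𝔪 ^ j ∧ ∑ i, d i ≤ j * D := by
    intro w hw
    induction hw using Submonoid.closure_induction with
    | mem w hw =>
      obtain ⟨d, hwd, hdD⟩ := hTdeg w hw
      by_cases hd : d = 0
      · exact ⟨d, 0, hwd, by simp, by simp [hd]⟩
      · exact ⟨d, 1, hwd, by simpa using h𝔪.mem_of_mem_graded_of_ne_zero h𝔪max hd hwd,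
          by simpa using hdD⟩
    | one => exact ⟨0, 0, SetLike.one_mem_graded 𝒜, by simp, by simp⟩
    | mul w w' _ _ ih ih' =>
      obtain ⟨d, j, hwd, hwj, hdj⟩ := ih
      obtain ⟨d', j', hwd', hwj', hdj'⟩ := ih'
      refine ⟨d + d', j + j', SetLike.mul_mem_graded hwd hwd',
        pow_add 𝔪 j j' ▸ Ideal.mul_mem_mul hwj hwj', ?_⟩
      simpa only [Pi.add_apply, Finset.sum_add_distrib, add_mul] using add_le_add hdj hdj'
  have hspan : Submodule.span k (Submonoid.closure T : Set R) ≤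
      ((𝔪 ^ t).restrictScalars k).comap (GradedAlgebra.proj 𝒜 g) := by
    refine Submodule.span_le.mpr fun w hw => ?_
    obtain ⟨d, j, hwd, hwj, hdj⟩ := hmono w hw
    change GradedAlgebra.proj 𝒜 g w ∈ 𝔪 ^ t
    rw [GradedAlgebra.proj_apply]
    by_cases hdg : d = g
    · subst hdg
      rw [decompose_of_mem_same 𝒜 hwd]
      exact Ideal.pow_le_pow_right (Nat.le_of_mul_le_mul_right (ht.trans hdj) hD) hwj
    · rw [decompose_of_mem_ne 𝒜 hwd hdg]
      exact zero_mem _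
  have hyspan : y ∈ Submodule.span k (Submonoid.closure T : Set R) := by
    rw [← Algebra.adjoin_eq_span, hT]
    trivial
  simpa [GradedAlgebra.proj_apply, decompose_of_mem_same 𝒜 hy] using hspan hyspan

theorem exists_mem_of_le_sum_of_le_radical [IsNoetherianRing R] (hfg : Algebra.FiniteType k R)
    {𝔪 : Ideal R} (h𝔪 : 𝔪.IsHomogeneous 𝒜) (h𝔪max : 𝔪.IsMaximal) {I : Ideal R}
    (hI : 𝔪 ≤ I.radical) :
    ∃ C, ∀ g y, y ∈ 𝒜 g → C ≤ ∑ i, g i → y ∈ I := by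
  obtain ⟨T, hT, D, hTdeg⟩ := hfg.exists_homogeneous_adjoin_eq_top 𝒜
  obtain ⟨t, ht⟩ := Ideal.exists_pow_le_of_le_radical_of_fg hI (IsNoetherian.noetherian 𝔪)
  refine ⟨t * (D + 1), fun g y hy hg => ht ?_⟩
  exact mem_pow_of_mul_le_sum 𝒜 h𝔪 h𝔪max hT D.succ_pos
    (fun w hw => (hTdeg w hw).imp fun d hd => ⟨hd.1, hd.2.trans D.le_succ⟩) hy hg

theorem mem_of_mem_graded_of_mem_span {S : Set R} {J : Ideal R} {g : Fin n → ℕ}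
    (hSJ : ∀ f ∈ S, ∃ d, f ∈ 𝒜 d ∧ (d ≤ g → ∀ r ∈ 𝒜 (g - d), r * f ∈ J)) {y : R}
    (hy : y ∈ 𝒜 g) (hyS : y ∈ Ideal.span S) : y ∈ J := by
  classical
  obtain ⟨c, hcS, rfl⟩ := Submodule.mem_span_set.mp hyS
  rw [← decompose_of_mem_same 𝒜 hy, Finsupp.sum, decompose_sum, DirectSum.sum_apply,
    Submodule.coe_sum]
  refine J.sum_mem fun f hf => ?_
  obtain ⟨d, hfd, hdJ⟩ := hSJ f (hcS hf)
  by_cases hdg : d ≤ g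
  · rw [smul_eq_mul, coe_decompose_mul_of_right_mem_of_le 𝒜 hfd hdg]
    exact hdJ hdg _ (SetLike.coe_mem _)
  · rw [smul_eq_mul, coe_decompose_mul_of_right_mem_of_not_le 𝒜 hfd hdg]
    exact J.zero_mem

theorem mem_pow_succ_of_add_mul_le_sum {I : Ideal R} {S : Set R} (hSI : Ideal.span S = I)
    {Δ : ℕ} (hSdeg : ∀ f ∈ S, ∃ d, f ∈ 𝒜 d ∧ ∑ i, d i ≤ Δ) {C : ℕ}
    (hC : ∀ g y, y ∈ 𝒜 g → C ≤ ∑ i, g i → y ∈ I) (m : ℕ) :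
    ∀ g y, y ∈ 𝒜 g → C + m * Δ ≤ ∑ i, g i → y ∈ I ^ (m + 1) := by
  induction m with
  | zero => simpa using hC
  | succ m ih =>
    intro g y hy hg
    refine mem_of_mem_graded_of_mem_span 𝒜 (fun f hf => ?_) hy
      (hSI ▸ hC g y hy (le_trans (by omega) hg))
    obtain ⟨d, hfd, hdΔ⟩ := hSdeg f hf
    refine ⟨d, hfd, fun hdg r hr => pow_succ I (m + 1) ▸ Ideal.mul_mem_mul (ih _ r hr ?_)
      (hSI ▸ Ideal.subset_span hf)⟩
    have hsum : ∑ i, (g - d) i + ∑ i, d i = ∑ i, g i := by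
      rw [← Finset.sum_add_distrib]
      exact Finset.sum_congr rfl fun i _ => Nat.sub_add_cancel (hdg i)
    rw [add_mul, one_mul] at hg
    omega

end Graded

theorem add_ceil_sub_mul_le_mul {s : ℝ} (hs : 1 ≤ s) {C Δ Γ q : ℕ} (hΓ : 0 < Γ)
    (hsΔ : s * Δ ≤ Γ) (hq : C + 1 ≤ q) : C + (⌈s * q⌉₊ - (C + 2)) * Δ ≤ q * Γ := by
  set m := ⌈s * q⌉₊ - (C + 2)
  rcases Nat.eq_zero_or_pos Δ with rfl | hΔ
  · nlinarith
  have hm : (C + 1 + m : ℝ) ≤ s * q := by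
    have hq' : (C + 1 : ℝ) ≤ q := by exact_mod_cast hq
    rcases Nat.eq_zero_or_pos m with hm0 | hm0
    · have hqs : (q : ℝ) ≤ s * q := le_mul_of_one_le_left (by positivity) hs
      rw [hm0, Nat.cast_zero]
      linarith
    · have hceil := Nat.ceil_lt_add_one (by positivity : 0 ≤ s * q)
      have hmcast : (m : ℝ) = ⌈s * q⌉₊ - (C + 2) := by
        rw [Nat.cast_sub (by omega)]
        push_cast
        ring
      linarith
  have hΔ' : (1 : ℝ) ≤ Δ := by exact_mod_cast hΔ
  have : ((C + m * Δ : ℕ) : ℝ) ≤ q * Γ := by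
    push_cast
    calc (C + m * Δ : ℝ) ≤ (C + 1 + m) * Δ := by nlinarith
      _ ≤ s * q * Δ := by gcongr
      _ = q * (s * Δ) := by ring
      _ ≤ q * Γ := by gcongr
  exact_mod_cast this

theorem stmt9_general {R : Type*} {n : ℕ} (k : Type*) [Field k] [CommRing R] [Algebra k R]
    (p : ℕ) (hp : p.Prime)
    (hfg : Algebra.FiniteType k R)
    (𝒜 : (Fin n → ℕ) → Submodule k R) [GradedAlgebra 𝒜]
    (𝔪 : Ideal R) (h𝔪hom : 𝔪.IsHomogeneous 𝒜) (h𝔪max : 𝔪.IsMaximal)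
    (I : Ideal R) (hIprim : I.radical = 𝔪)
    (δ : Fin n → ℕ)
    (hIgen : ∃ S : Set R, Ideal.span S = I ∧
      ∀ f ∈ S, ∃ g : Fin n → ℕ, f ∈ 𝒜 g ∧ ∀ i, g i ≤ δ i)
    (s : ℝ) (hs : 1 ≤ s)
    (x : R) (gx : Fin n → ℕ) (hx : x ∈ 𝒜 gx) (hgx0 : gx ≠ 0)
    (hdeg : ∀ i, s * (δ i : ℝ) ≤ (gx i : ℝ)) :
    x ∈ weakCl p I s := by
  have := Algebra.FiniteType.isNoetherianRing k R
  obtain ⟨S, hSI, hSdeg⟩ := hIgen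
  obtain ⟨C, hC⟩ := exists_mem_of_le_sum_of_le_radical 𝒜 hfg h𝔪hom h𝔪max hIprim.ge
  have hpow := mem_pow_succ_of_add_mul_le_sum 𝒜 hSI (Δ := ∑ i, δ i)
    (fun f hf => (hSdeg f hf).imp fun d hd => ⟨hd.1, Finset.sum_le_sum fun i _ => hd.2 i⟩) hC
  have hΓ : 0 < ∑ i, gx i :=
    Nat.pos_of_ne_zero fun h => hgx0 (funext fun i => Finset.sum_eq_zero_iff.mp h i (by simp))
  have hsΔ : s * ((∑ i, δ i : ℕ) : ℝ) ≤ ((∑ i, gx i : ℕ) : ℝ) := by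
    push_cast
    rw [Finset.mul_sum]
    exact Finset.sum_le_sum fun i _ => hdeg i
  obtain ⟨c, hc, b, hb, N, hcb⟩ := exists_mem_rCirc_mul_eq_mul h𝔪max
    (I := I ^ (C + 1)) (by rw [Ideal.radical_pow I C.succ_ne_zero, hIprim])
  refine ⟨c, hc, C + 1 + N, fun e he => ?_⟩
  have hq : C + 1 + N ≤ p ^ e := he.trans (Nat.lt_pow_self hp.one_lt).le
  have hxq𝔪 : x ^ p ^ e ∈ 𝔪 ^ N := Ideal.pow_le_pow_right (by omega)
    (Ideal.pow_mem_pow (h𝔪hom.mem_of_mem_graded_of_ne_zero h𝔪max hgx0 hx) _)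
  have hxqI := hpow _ (p ^ e • gx) _ (SetLike.pow_mem_graded _ hx) (by
    rw [show ∑ i, (p ^ e • gx) i = p ^ e * ∑ i, gx i by simp [Finset.mul_sum]]
    exact add_ceil_sub_mul_le_mul hs hΓ hsΔ (by omega))
  have hbxq := Ideal.mul_mem_mul hb hxqI
  rw [← pow_add] at hbxq
  rw [mixedPow, hcb _ hxq𝔪]
  exact Ideal.mem_sup_left (Ideal.pow_le_pow_right (by omega) hbxq)

/-- in an `ℕⁿ`-graded graded-local finitely generated algebra over a field `k`
of characteristic `p > 0`, with homogeneous maximal ideal `𝔪`, if `I` is an `𝔪`-primary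
homogeneous ideal generated by homogeneous elements of degree at most `δ` coordinatewise,
and `x` is homogeneous with `deg x ≠ 0` and `deg x ≥ s·δ` coordinatewise, then `x` belongs
to the weak `s`-closure of `I`. -/
theorem stmt9 {R : Type*} {n : ℕ} (k : Type*) [Field k] [CommRing R] [Algebra k R]
    (p : ℕ) (hp : p.Prime) (hcpk : CharP k p)
    (hfg : Algebra.FiniteType k R)
    (𝒜 : (Fin n → ℕ) → Submodule k R) [GradedAlgebra 𝒜]
    (𝔪 : Ideal R) (h𝔪hom : 𝔪.IsHomogeneous 𝒜) (h𝔪max : 𝔪.IsMaximal)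
    (h𝔪uniq : ∀ 𝔪' : Ideal R, 𝔪'.IsHomogeneous 𝒜 → 𝔪'.IsMaximal → 𝔪' = 𝔪)
    (I : Ideal R) (hIhom : I.IsHomogeneous 𝒜) (hIprim : I.radical = 𝔪)
    (δ : Fin n → ℕ)
    (hIgen : ∃ S : Set R, Ideal.span S = I ∧
      ∀ f ∈ S, ∃ g : Fin n → ℕ, f ∈ 𝒜 g ∧ ∀ i, g i ≤ δ i)
    (s : ℝ) (hs : 1 ≤ s)
    (x : R) (gx : Fin n → ℕ) (hx : x ∈ 𝒜 gx) (hgx0 : gx ≠ 0)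
    (hdeg : ∀ i, s * (δ i : ℝ) ≤ (gx i : ℝ)) :
    x ∈ weakCl p I s :=
  stmt9_general k p hp hfg 𝒜 𝔪 h𝔪hom h𝔪max I hIprim δ hIgen s hs x gx hx hgx0 hdeg
end

section
/- Let R be a commutative Noetherian domain of prime characteristic p > 0, let I be an ideal of R, let s > t ≥ 1 be real numbers, and suppose z belongs to the weak t-closure of I but not to the weak s-closure of I. Let S = R[X] be a polynomial ring over R and J = IS. Then for every n ∈ ℕ, z·X^n does not belong to the weak s-closure of J; consequently the S-module (weak t-closure of J)/(weak s-closure of J) has infinite length. -/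
open Pointwise

/-!
In characteristic `p`, extending an ideal to `R[X]` commutes with Frobenius powers, hence with
the mixed powers `I^(s,q)`, so every coefficient of an element of `(IR[X])^(s,q)` lies in
`I^(s,q)`. In a domain the trailing coefficient of `c * f ^ q` is `c₀ * f₀ ^ q`, so `f` in the
weak `s`-closure of `IR[X]` puts its trailing coefficient `f₀` in the weak `s`-closure of `I`;
thus no `Xⁿ (z + X g)` is in the weak `s`-closure of `IR[X]`.
If the quotient had finite length, the images of `Jt ∩ (Xⁿ)` in it would stabilize, giving
`z Xⁿ ≡ X^(n+1) g` modulo `Js` for some `n` and `g`, which is excluded by the above.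
-/

open Polynomial

section Frobenius

variable {R S : Type*} [CommRing R] [CommRing S] (f : R →+* S)

lemma map_frobPow_le (I : Ideal R) (q : ℕ) : (frobPow I q).map f ≤ frobPow (I.map f) q := by
  rw [frobPow, Ideal.map_span, Ideal.span_le]
  rintro _ ⟨_, ⟨a, ha, rfl⟩, rfl⟩
  exact Ideal.subset_span ⟨f a, Ideal.mem_map_of_mem f ha, (map_pow f a q).symm⟩

lemma map_mixedPow_le (I : Ideal R) (s : ℝ) (q : ℕ) :
    (mixedPow I s q).map f ≤ mixedPow (I.map f) s q := by
  rw [mixedPow, mixedPow, Submodule.add_eq_sup, Submodule.add_eq_sup, Ideal.map_sup, Ideal.map_pow]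
  exact sup_le_sup_left (map_frobPow_le f I q) _

variable (p : ℕ) [ExpChar S p]

lemma frobPow_map (I : Ideal R) (e : ℕ) :
    frobPow (I.map f) (p ^ e) = (frobPow I (p ^ e)).map f := by
  refine le_antisymm ?_ (map_frobPow_le f I _)
  -- `g ↦ g ^ p ^ e` is a ring map, so the `g` with `g ^ p ^ e ∈ (frobPow I (p ^ e)).map f`
  -- form an ideal.
  have hI : I.map f ≤ ((frobPow I (p ^ e)).map f).comap (iterateFrobenius S p e) := by
    rw [Ideal.map_le_iff_le_comap, Ideal.comap_comap]
    intro a ha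
    rw [Ideal.mem_comap, RingHom.comp_apply, iterateFrobenius_def, ← map_pow]
    exact Ideal.mem_map_of_mem f (Ideal.subset_span ⟨a, ha, rfl⟩)
  rw [frobPow, Ideal.span_le]
  rintro _ ⟨g, hg, rfl⟩
  exact hI hg

lemma mixedPow_map (I : Ideal R) (s : ℝ) (e : ℕ) :
    mixedPow (I.map f) s (p ^ e) = (mixedPow I s (p ^ e)).map f := by
  rw [mixedPow, mixedPow, frobPow_map f p, Submodule.add_eq_sup, Submodule.add_eq_sup,
    Ideal.map_sup, Ideal.map_pow]

end Frobenius

section WeakClosure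

variable {R : Type*} [CommRing R] (p : ℕ)

lemma one_mem_RCirc : (1 : R) ∈ RCirc R :=
  fun _ hP => hP.1.1.ne_top ∘ (Ideal.eq_top_iff_one _).mpr

lemma mem_RCirc_iff_ne_zero [IsDomain R] {c : R} : c ∈ RCirc R ↔ c ≠ 0 := by
  simp [RCirc, IsDomain.minimalPrimes_eq_singleton_bot]

lemma zero_mem_weakCl [NeZero p] (I : Ideal R) (s : ℝ) : 0 ∈ weakCl p I s :=
  ⟨1, one_mem_RCirc, 0, fun e _ => by simp [zero_pow (pow_ne_zero e (NeZero.ne p))]⟩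

lemma mul_mem_weakCl {I : Ideal R} {s : ℝ} (r : R) {x : R} (hx : x ∈ weakCl p I s) :
    r * x ∈ weakCl p I s := by
  obtain ⟨c, hc, N, hN⟩ := hx
  refine ⟨c, hc, N, fun e he => ?_⟩
  rw [mul_pow, mul_left_comm]
  exact Ideal.mul_mem_left _ _ (hN e he)

lemma map_mem_weakCl_map {S : Type*} [CommRing S] [IsDomain R] [IsDomain S] {f : R →+* S}
    (hf : Function.Injective f) {I : Ideal R} {s : ℝ} {x : R} (hx : x ∈ weakCl p I s) :
    f x ∈ weakCl p (I.map f) s := by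
  obtain ⟨c, hc, N, hN⟩ := hx
  refine ⟨f c, mem_RCirc_iff_ne_zero.mpr ?_, N, fun e he => ?_⟩
  · exact (map_ne_zero_iff f hf).mpr (mem_RCirc_iff_ne_zero.mp hc)
  · rw [← map_pow, ← map_mul]
    exact map_mixedPow_le f I s _ (Ideal.mem_map_of_mem f (hN e he))

end WeakClosure

section TrailingCoeff

variable {R : Type*} [Semiring R] [NoZeroDivisors R]

lemma Polynomial.trailingCoeff_pow (f : R[X]) (n : ℕ) :
    (f ^ n).trailingCoeff = f.trailingCoeff ^ n := by
  induction n with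
  | zero => simp [trailingCoeff]
  | succ n ih => rw [pow_succ, trailingCoeff_mul, ih, pow_succ]

lemma Polynomial.trailingCoeff_X_pow_mul_C_add_X_mul [Nontrivial R] {z : R} (hz : z ≠ 0)
    (n : ℕ) (g : R[X]) : (X ^ n * (C z + X * g)).trailingCoeff = z := by
  have hX : (X ^ n : R[X]).trailingCoeff = 1 := by
    rw [trailingCoeff, natTrailingDegree_X_pow, coeff_X_pow_self]
  rw [trailingCoeff_mul, hX, one_mul, trailingCoeff_eq_coeff_zero] <;> simp [hz]

end TrailingCoeff

lemma trailingCoeff_mem_weakCl {R : Type*} [CommRing R] [IsDomain R] (p : ℕ) [ExpChar R p]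
    {I : Ideal R} {s : ℝ} {f : R[X]} (hf : f ∈ weakCl p (I.map C) s) :
    f.trailingCoeff ∈ weakCl p I s := by
  obtain ⟨c, hc, N, hN⟩ := hf
  refine ⟨c.trailingCoeff, mem_RCirc_iff_ne_zero.mpr ?_, N, fun e he => ?_⟩
  · exact trailingCoeff_nonzero_iff_nonzero.mpr (mem_RCirc_iff_ne_zero.mp hc)
  · have hmem := hN e he
    rw [mixedPow_map C p] at hmem
    rw [← trailingCoeff_pow, ← trailingCoeff_mul]
    exact Ideal.mem_map_C_iff.mp hmem _

lemma IsArtinian.exists_inf_le_inf_sup {A M : Type*} [Ring A] [AddCommGroup M] [Module A M]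
    (N L : Submodule A M) [IsArtinian A (N ⧸ L.comap N.subtype)]
    (K : ℕ → Submodule A M) (hK : Antitone K) : ∃ n, N ⊓ K n ≤ N ⊓ K (n + 1) ⊔ L := by
  set Q := L.comap N.subtype
  let chain : ℕ →o (Submodule A (N ⧸ Q))ᵒᵈ :=
    ⟨fun n => OrderDual.toDual (((K n).comap N.subtype).map Q.mkQ),
      fun _ _ h => Submodule.map_mono (Submodule.comap_mono (hK h))⟩
  obtain ⟨n, hn⟩ := IsArtinian.monotone_stabilizes chain
  refine ⟨n, fun x ⟨hxN, hxK⟩ => ?_⟩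
  have hstable : ((K n).comap N.subtype).map Q.mkQ = ((K (n + 1)).comap N.subtype).map Q.mkQ :=
    hn (n + 1) n.le_succ
  have hx : Q.mkQ ⟨x, hxN⟩ ∈ ((K (n + 1)).comap N.subtype).map Q.mkQ :=
    hstable ▸ ⟨⟨x, hxN⟩, hxK, rfl⟩
  obtain ⟨y, hy, hyx⟩ := hx
  have hxy : x - y ∈ L := by
    simpa [Q] using Q.neg_mem ((Submodule.Quotient.eq Q).mp hyx)
  exact Submodule.mem_sup.mpr ⟨y, ⟨y.2, hy⟩, x - y, hxy, add_sub_cancel _ _⟩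

theorem stmt11_general {R : Type*} [CommRing R] [IsDomain R]
    (p : ℕ) (hp : p.Prime) (hcp : CharP R p)
    (I : Ideal R) (t s : ℝ)
    (z : R) (hzt : z ∈ weakCl p I t) (hzs : z ∉ weakCl p I s) :
    (∀ n : ℕ, Polynomial.C z * Polynomial.X ^ n ∉
        weakCl p (I.map (Polynomial.C : R →+* Polynomial R)) s) ∧
      ∀ Jt Js : Ideal (Polynomial R),
        (Jt : Set (Polynomial R)) = weakCl p (I.map (Polynomial.C : R →+* Polynomial R)) t →
        (Js : Set (Polynomial R)) = weakCl p (I.map (Polynomial.C : R →+* Polynomial R)) s →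
        ¬ IsFiniteLength (Polynomial R)
          (↥Jt ⧸ Submodule.comap Jt.subtype (Js : Submodule (Polynomial R) (Polynomial R))) := by
  have := Fact.mk hp
  have hz : z ≠ 0 := fun h => hzs (h ▸ zero_mem_weakCl p I s)
  have key : ∀ n (g : R[X]), X ^ n * (C z + X * g) ∉ weakCl p (I.map C) s := fun n g hmem =>
    hzs (trailingCoeff_X_pow_mul_C_add_X_mul hz n g ▸ trailingCoeff_mem_weakCl p hmem)
  refine ⟨fun n hn => key n 0 (by rwa [mul_zero, add_zero, mul_comm]), fun Jt Js hJt hJs hfin => ?_⟩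
  have := (isFiniteLength_iff_isNoetherian_isArtinian.mp hfin).2
  obtain ⟨n, hn⟩ := IsArtinian.exists_inf_le_inf_sup Jt Js (fun n => Ideal.span {X ^ n})
    fun _ _ h => Ideal.span_singleton_le_span_singleton.mpr (pow_dvd_pow X h)
  have hzJt : C z * X ^ n ∈ Jt := by
    rw [← SetLike.mem_coe, hJt, mul_comm]
    exact mul_mem_weakCl p _ (map_mem_weakCl_map p C_injective hzt)
  obtain ⟨y, ⟨-, hy⟩, w, hw, hyw⟩ :=
    Submodule.mem_sup.mp (hn ⟨hzJt, Ideal.mem_span_singleton.mpr (dvd_mul_left _ _)⟩)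
  obtain ⟨g, rfl⟩ := Ideal.mem_span_singleton.mp hy
  apply key n (-g)
  have hw_eq : w = X ^ n * (C z + X * -g) := by linear_combination hyw
  rw [← hw_eq, ← hJs]
  exact hw

/-- if `R` is a Noetherian domain of characteristic `p`, `s > t ≥ 1`, and
`z` is in the weak `t`-closure but not the weak `s`-closure of `I`, then in `S = R[X]`
with `J = IS`, no `z·Xⁿ` lies in the weak `s`-closure of `J`; consequently the quotient
(weak `t`-closure of `J`)/(weak `s`-closure of `J`) has infinite length over `S`. -/
theorem stmt11 {R : Type*} [CommRing R] [IsDomain R] [IsNoetherianRing R]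
    (p : ℕ) (hp : p.Prime) (hcp : CharP R p)
    (I : Ideal R) (t s : ℝ) (ht : 1 ≤ t) (hts : t < s)
    (z : R) (hzt : z ∈ weakCl p I t) (hzs : z ∉ weakCl p I s) :
    (∀ n : ℕ, Polynomial.C z * Polynomial.X ^ n ∉
        weakCl p (I.map (Polynomial.C : R →+* Polynomial R)) s) ∧
      ∀ Jt Js : Ideal (Polynomial R),
        (Jt : Set (Polynomial R)) = weakCl p (I.map (Polynomial.C : R →+* Polynomial R)) t →
        (Js : Set (Polynomial R)) = weakCl p (I.map (Polynomial.C : R →+* Polynomial R)) s →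
        ¬ IsFiniteLength (Polynomial R)
          (↥Jt ⧸ Submodule.comap Jt.subtype (Js : Submodule (Polynomial R) (Polynomial R))) :=
  stmt11_general p hp hcp I t s z hzt hzs
end

section
/- Let R be a commutative Noetherian ring of prime characteristic p > 0, let I be an ideal of R, and let s > 1 be a real number. Then for every k ∈ ℕ, the k-fold iterate of the weak s-closure operation applied to I is contained in the intersection over all real t with 1 ≤ t < s of the weak t-closure of I. In particular, the s-closure of I (the stable value of the increasing chain of iterated weak s-closures of I) is contained in ∩_{1 ≤ t < s} (weak t-closure of I). -/
open Pointwise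

/-!
Fix `1 ≤ t < s` and induct on `k`; the step is `weakCl p J s ⊆ weakCl p I t` whenever
`J ⊆ weakCl p I t`. Since `J = (y₁, …, yₘ)` is finitely generated and Frobenius is additive, a
single `c₀ ∈ R°` serves all of `J`: `c₀ J^[q] ⊆ I^(t,q) ⊆ I^q` for all large `q`. This absorbs
the Frobenius part of `J^(s,q)`. For the ordinary part, write `q = q₀ P` with `P = p^j` fixed so
that `(s - t) P ≥ m + 1`; by pigeonhole `J^⌈sq⌉ ⊆ (J^[q₀])^U` for `U = ⌈tP⌉`, hence
`c₀^U J^⌈sq⌉ ⊆ I^(q₀ U) ⊆ I^⌈tq⌉`. So `c₀^(U+1) c` is a multiplier for every `x ∈ weakCl p J s`.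
-/

open Filter

section

variable {R : Type*} [CommRing R]

def rCircSubmonoid (R : Type*) [CommRing R] : Submonoid R where
  carrier := RCirc R
  one_mem' _ hP h := hP.1.1.ne_top ((Ideal.eq_top_iff_one _).mpr h)
  mul_mem' ha hb P hP h := (hP.1.1.mem_or_mem h).elim (ha P hP) (hb P hP)

theorem mem_weakCl_iff {p : ℕ} {I : Ideal R} {s : ℝ} {x : R} :
    x ∈ weakCl p I s ↔ ∃ c ∈ RCirc R, ∀ᶠ e in atTop, c * x ^ p ^ e ∈ mixedPow I s (p ^ e) := by
  simp only [weakCl, Set.mem_ofPred_eq, eventually_atTop]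

theorem frobPow_le_pow (I : Ideal R) (q : ℕ) : frobPow I q ≤ I ^ q :=
  Ideal.span_le.mpr fun _ ⟨_, hf, hq⟩ => hq ▸ Ideal.pow_mem_pow hf q

theorem frobPow_le_mixedPow (I : Ideal R) (s : ℝ) (q : ℕ) : frobPow I q ≤ mixedPow I s q :=
  le_sup_right

theorem pow_ceil_le_mixedPow (I : Ideal R) (s : ℝ) (q : ℕ) :
    I ^ ⌈s * (q : ℝ)⌉₊ ≤ mixedPow I s q :=
  le_sup_left

theorem mixedPow_le_pow (I : Ideal R) {s : ℝ} (hs : 1 ≤ s) (q : ℕ) : mixedPow I s q ≤ I ^ q := by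
  refine sup_le (Ideal.pow_le_pow_right ((Nat.cast_le (α := ℝ)).mp ?_)) (frobPow_le_pow I q)
  exact (le_mul_of_one_le_left (Nat.cast_nonneg q) hs).trans (Nat.le_ceil _)

theorem subset_weakCl (p : ℕ) (I : Ideal R) (s : ℝ) : (I : Set R) ⊆ weakCl p I s := fun x hx =>
  ⟨1, (rCircSubmonoid R).one_mem, 0, fun e _ => by
    rw [one_mul]; exact frobPow_le_mixedPow I s _ (Ideal.subset_span ⟨x, hx, rfl⟩)⟩

theorem span_finset_eq_sum_span_singleton (S : Finset R) :
    Ideal.span (S : Set R) = ∑ y ∈ S, Ideal.span {y} := by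
  classical
  induction S using Finset.induction with
  | empty => simp
  | insert a S ha ih => rw [Finset.coe_insert, Ideal.span_insert, Finset.sum_insert ha, ih]; rfl

theorem le_sum_div_of_mul_add_le {ι : Type*} (S : Finset ι) (k : ι → ℕ) {q u : ℕ} (hq : 0 < q)
    (h : q * u + S.card * (q - 1) ≤ ∑ i ∈ S, k i) : u ≤ ∑ i ∈ S, k i / q := by
  have hk : ∑ i ∈ S, k i ≤ q * ∑ i ∈ S, k i / q + S.card * (q - 1) := by
    rw [Finset.mul_sum, ← smul_eq_mul, ← Finset.sum_const, ← Finset.sum_add_distrib]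
    refine Finset.sum_le_sum fun i _ => ?_
    have := Nat.div_add_mod (k i) q
    have := Nat.mod_lt (k i) hq
    generalize q * (k i / q) = a at *
    omega
  exact Nat.le_of_mul_le_mul_left (by omega) hq

/-- Pigeonhole: a monomial of degree at least `q u + m (q - 1)` in `m` generators is divisible
by a product of `u` of their `q`-th powers. -/
theorem span_pow_le_frobPow_pow (S : Finset R) {q u n : ℕ} (hq : 0 < q)
    (hn : q * u + S.card * (q - 1) ≤ n) :
    Ideal.span (S : Set R) ^ n ≤ frobPow (Ideal.span S) q ^ u := by
  classical
  have hy : ∀ y ∈ S, ∀ a : ℕ, Ideal.span {y} ^ a ≤ frobPow (Ideal.span S) q ^ (a / q) := by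
    intro y hy a
    have hyq : Ideal.span {y} ^ q ≤ frobPow (Ideal.span S) q := by
      rw [Ideal.span_singleton_pow, Ideal.span_singleton_le_iff_mem]
      exact Ideal.subset_span ⟨y, Ideal.subset_span hy, rfl⟩
    calc Ideal.span {y} ^ a ≤ Ideal.span {y} ^ (q * (a / q)) :=
          Ideal.pow_le_pow_right (Nat.mul_div_le a q)
      _ ≤ _ := by rw [pow_mul]; exact Ideal.pow_right_mono hyq _
  conv_lhs => rw [span_finset_eq_sum_span_singleton, Finset.sum_pow_eq_sum_piAntidiag]
  refine Finset.sum_induction _ (· ≤ _) (fun _ _ => sup_le) bot_le fun k hk => ?_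
  obtain ⟨hsum, -⟩ := Finset.mem_piAntidiag.mp hk
  calc _ ≤ ∏ y ∈ S, Ideal.span {y} ^ k y := Ideal.mul_le_right
    _ ≤ ∏ y ∈ S, frobPow (Ideal.span S) q ^ (k y / q) := Finset.prod_le_prod' fun y hyS => hy y hyS _
    _ = frobPow (Ideal.span S) q ^ ∑ y ∈ S, k y / q := by rw [Finset.prod_pow_eq_pow_sum]
    _ ≤ _ := Ideal.pow_le_pow_right (le_sum_div_of_mul_add_le S k hq (hsum ▸ hn))

theorem exists_eventually_forall_mul_mem_mixedPow {p : ℕ} {I : Ideal R} {t : ℝ} (S : Finset R)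
    (hS : (S : Set R) ⊆ weakCl p I t) :
    ∃ c ∈ RCirc R, ∀ᶠ e in atTop, ∀ y ∈ S, c * y ^ p ^ e ∈ mixedPow I t (p ^ e) := by
  classical
  have h : ∀ y ∈ S, ∃ c ∈ RCirc R, ∀ᶠ e in atTop, c * y ^ p ^ e ∈ mixedPow I t (p ^ e) :=
    fun y hy => mem_weakCl_iff.mp (hS hy)
  choose! c hc hev using h
  refine ⟨∏ y ∈ S, c y, Submonoid.prod_mem (rCircSubmonoid R) hc, ?_⟩
  refine (eventually_all_finset S).mpr fun y hy => (hev y hy).mono fun e he => ?_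
  rw [← Finset.mul_prod_erase S c hy, mul_comm (c y), mul_assoc]
  exact Ideal.mul_mem_left _ _ he

theorem ceil_mul_natCast_mul_le (x : ℝ) (q P : ℕ) :
    ⌈x * ((q * P : ℕ) : ℝ)⌉₊ ≤ q * ⌈x * P⌉₊ := by
  refine Nat.ceil_le.mpr ?_
  push_cast
  calc x * (q * P) = q * (x * P) := by ring
    _ ≤ q * ⌈x * P⌉₊ := mul_le_mul_of_nonneg_left (Nat.le_ceil _) (Nat.cast_nonneg q)

theorem mul_ceil_add_le_ceil_mul {s t : ℝ} (ht : 0 ≤ t) {m P : ℕ} (hP : (m + 1 : ℝ) ≤ (s - t) * P)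
    (q : ℕ) : q * ⌈t * P⌉₊ + m * (q - 1) ≤ ⌈s * ((q * P : ℕ) : ℝ)⌉₊ := by
  have hceil : (⌈t * P⌉₊ : ℝ) < t * P + 1 := Nat.ceil_lt_add_one (by positivity)
  calc q * ⌈t * P⌉₊ + m * (q - 1) ≤ q * (⌈t * P⌉₊ + m) := by
        rw [mul_add, mul_comm q m]; gcongr; omega
    _ ≤ ⌈s * ((q * P : ℕ) : ℝ)⌉₊ := by
      refine (Nat.cast_le (α := ℝ)).mp (le_trans ?_ (Nat.le_ceil _))
      push_cast
      calc (q : ℝ) * (⌈t * P⌉₊ + m) ≤ q * (s * P) :=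
            mul_le_mul_of_nonneg_left (by linarith) (Nat.cast_nonneg q)
        _ = s * (q * P) := by ring

theorem pow_succ_mul_mixedPow_le {I C : Ideal R} (S : Finset R) {s t : ℝ} {q Q U : ℕ} (hq : 0 < q)
    (hdeg : q * U + S.card * (q - 1) ≤ ⌈s * (Q : ℝ)⌉₊) (hdeg' : ⌈t * (Q : ℝ)⌉₊ ≤ q * U)
    (hC : C * frobPow (Ideal.span (S : Set R)) q ≤ I ^ q)
    (hCQ : C * frobPow (Ideal.span (S : Set R)) Q ≤ mixedPow I t Q) :
    C ^ (U + 1) * mixedPow (Ideal.span (S : Set R)) s Q ≤ mixedPow I t Q := by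
  have hpow : C ^ U * Ideal.span (S : Set R) ^ ⌈s * (Q : ℝ)⌉₊ ≤ I ^ ⌈t * (Q : ℝ)⌉₊ :=
    calc _ ≤ C ^ U * frobPow (Ideal.span (S : Set R)) q ^ U :=
          Ideal.mul_mono_right (span_pow_le_frobPow_pow S hq hdeg)
      _ = (C * frobPow (Ideal.span (S : Set R)) q) ^ U := (mul_pow _ _ _).symm
      _ ≤ (I ^ q) ^ U := Ideal.pow_right_mono hC U
      _ = I ^ (q * U) := (pow_mul _ _ _).symm
      _ ≤ _ := Ideal.pow_le_pow_right hdeg'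
  rw [pow_succ, mixedPow, mul_add]
  refine sup_le ?_ ?_
  · exact (Ideal.mul_mono_left Ideal.mul_le_left).trans (hpow.trans (pow_ceil_le_mixedPow I t Q))
  · rw [mul_assoc]
    exact Ideal.mul_le_right.trans hCQ

end

section CharP

variable {R : Type*} [CommRing R] {p : ℕ} [Fact p.Prime] [CharP R p]

theorem frobPow_span (S : Set R) (e : ℕ) :
    frobPow (Ideal.span S) (p ^ e) = Ideal.span ((· ^ p ^ e) '' S) := by
  refine le_antisymm (Ideal.span_le.mpr ?_) (Ideal.span_mono (Set.image_mono Ideal.subset_span))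
  rintro _ ⟨f, hf, rfl⟩
  induction hf using Submodule.span_induction with
  | mem y hy => exact Ideal.subset_span ⟨y, hy, rfl⟩
  | zero => simp [zero_pow (pow_ne_zero e (Fact.out : p.Prime).ne_zero)]
  | add f g _ _ hf hg =>
    show (f + g) ^ p ^ e ∈ _
    rw [add_pow_char_pow]; exact add_mem hf hg
  | smul r f _ hf =>
    show (r * f) ^ p ^ e ∈ _
    rw [mul_pow]; exact Ideal.mul_mem_left _ _ hf

theorem span_singleton_mul_frobPow_le {A : Ideal R} {c : R} {S : Set R} {e : ℕ}
    (h : ∀ y ∈ S, c * y ^ p ^ e ∈ A) : Ideal.span {c} * frobPow (Ideal.span S) (p ^ e) ≤ A := by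
  rw [frobPow_span, Ideal.span_mul_span', Ideal.span_le]
  rintro _ ⟨_, rfl, _, ⟨y, hy, rfl⟩, rfl⟩
  exact h y hy

theorem weakCl_subset_weakCl_of_subset [IsNoetherianRing R] {I J : Ideal R} {s t : ℝ}
    (ht : 1 ≤ t) (hts : t < s) (hJ : (J : Set R) ⊆ weakCl p I t) :
    weakCl p J s ⊆ weakCl p I t := by
  obtain ⟨S, rfl⟩ : J.FG := IsNoetherian.noetherian J
  obtain ⟨c₀, hc₀, hev₀⟩ :=
    exists_eventually_forall_mul_mem_mixedPow S (Ideal.subset_span.trans hJ)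
  obtain ⟨j, hj⟩ : ∃ j : ℕ, (S.card + 1 : ℝ) / (s - t) < (p : ℝ) ^ j :=
    pow_unbounded_of_one_lt _ (by exact_mod_cast (Fact.out : p.Prime).one_lt)
  have hP : (S.card + 1 : ℝ) ≤ (s - t) * (p ^ j : ℕ) := by
    rw [div_lt_iff₀ (sub_pos.mpr hts)] at hj
    push_cast
    linarith
  intro x hx
  obtain ⟨c, hc, hevx⟩ := mem_weakCl_iff.mp hx
  refine mem_weakCl_iff.mpr ⟨c₀ ^ (⌈t * (p ^ j : ℕ)⌉₊ + 1) * c,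
    (rCircSubmonoid R).mul_mem ((rCircSubmonoid R).pow_mem hc₀ _) hc, ?_⟩
  filter_upwards [hevx, hev₀, (tendsto_sub_atTop_nat j).eventually hev₀, eventually_ge_atTop j]
    with e hxe he hej hje
  have hq : p ^ (e - j) * p ^ j = p ^ e := pow_sub_mul_pow p hje
  have hmem := Ideal.mul_mem_mul
    (Ideal.mem_span_singleton_self (c₀ ^ (⌈t * (p ^ j : ℕ)⌉₊ + 1))) hxe
  rw [← Ideal.span_singleton_pow, ← mul_assoc, ← hq] at hmem
  rw [← hq]
  refine pow_succ_mul_mixedPow_le S (pow_pos (Fact.out : p.Prime).pos _)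
    (mul_ceil_add_le_ceil_mul (by linarith) hP _) (ceil_mul_natCast_mul_le t _ _) ?_ ?_ hmem
  · exact (span_singleton_mul_frobPow_le hej).trans (mixedPow_le_pow I ht _)
  · exact hq ▸ span_singleton_mul_frobPow_le he

end CharP

theorem stmt13_general {R : Type*} [CommRing R] [IsNoetherianRing R]
    (p : ℕ) (hp : p.Prime) (hcp : CharP R p)
    (I : Ideal R) (s : ℝ)
    (F : ℕ → Ideal R) (hF0 : F 0 = I)
    (hFsucc : ∀ k : ℕ, ((F (k + 1) : Ideal R) : Set R) = weakCl p (F k) s) :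
    ∀ k : ℕ, ∀ t : ℝ, 1 ≤ t → t < s → ((F k : Ideal R) : Set R) ⊆ weakCl p I t := by
  have := Fact.mk hp
  intro k t ht hts
  induction k with
  | zero => rw [hF0]; exact subset_weakCl p I t
  | succ k ih => rw [hFsucc k]; exact weakCl_subset_weakCl_of_subset ht hts ih

/-- for `s > 1`, every iterate of the weak `s`-closure operation applied to
`I` (realized by a chain of ideals `F k` with `F 0 = I` and `F (k+1)` the weak `s`-closure
of `F k`) is contained in the weak `t`-closure of `I` for every real `1 ≤ t < s`; in
particular so is the `s`-closure of `I`, the stable value of this chain. -/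
theorem stmt13 {R : Type*} [CommRing R] [IsNoetherianRing R]
    (p : ℕ) (hp : p.Prime) (hcp : CharP R p)
    (I : Ideal R) (s : ℝ) (hs : 1 < s)
    (F : ℕ → Ideal R) (hF0 : F 0 = I)
    (hFsucc : ∀ k : ℕ, ((F (k + 1) : Ideal R) : Set R) = weakCl p (F k) s) :
    ∀ k : ℕ, ∀ t : ℝ, 1 ≤ t → t < s → ((F k : Ideal R) : Set R) ⊆ weakCl p I t :=
  stmt13_general p hp hcp I s F hF0 hFsucc
end

section
/- Let R be a commutative Noetherian ring of prime characteristic p > 0, let I be an ideal of R, and let s ≥ 1 be a real number. Then there exists ε > 0 such that for all real t with s < t ≤ s + ε, the weak t-closure of I equals the weak (s+ε)-closure of I. -/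
open Pointwise

lemma rcirc_one {R : Type*} [CommRing R] : (1 : R) ∈ RCirc R := by
  intro P hP h1
  exact hP.1.1.ne_top (Ideal.eq_top_iff_one P |>.mpr h1)

lemma rcirc_mul {R : Type*} [CommRing R] {c d : R} (hc : c ∈ RCirc R) (hd : d ∈ RCirc R) :
    c * d ∈ RCirc R := by
  intro P hP h
  rcases hP.1.1.mem_or_mem h with h' | h'
  · exact hc P hP h'
  · exact hd P hP h'

lemma mixedPow_anti {R : Type*} [CommRing R] (I : Ideal R) {t t' : ℝ} (h : t ≤ t') (q : ℕ) :
    mixedPow I t' q ≤ mixedPow I t q := by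
  unfold mixedPow
  have : ⌈t * (q : ℝ)⌉₊ ≤ ⌈t' * (q : ℝ)⌉₊ :=
    Nat.ceil_le_ceil (mul_le_mul_of_nonneg_right h (by positivity))
  exact add_le_add (Ideal.pow_le_pow_right this) le_rfl

lemma weakCl_anti {R : Type*} [CommRing R] (p : ℕ) (I : Ideal R) {t t' : ℝ} (h : t ≤ t') :
    weakCl p I t' ⊆ weakCl p I t := by
  rintro x ⟨c, hc, N, hN⟩
  exact ⟨c, hc, N, fun e he => mixedPow_anti I h _ (hN e he)⟩

/-- `weakCl` as an ideal. -/
noncomputable def weakClIdeal {R : Type*} [CommRing R] (p : ℕ) (hp : p.Prime) (hcp : CharP R p)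
    (I : Ideal R) (s : ℝ) : Ideal R where
  carrier := weakCl p I s
  zero_mem' := by
    refine ⟨1, rcirc_one, 1, fun e he => ?_⟩
    have : (0 : R) ^ p ^ e = 0 := zero_pow (pow_ne_zero _ hp.ne_zero)
    rw [this, mul_zero]
    exact Submodule.zero_mem _
  add_mem' := by
    haveI := Fact.mk hp
    rintro x y ⟨c, hc, N, hN⟩ ⟨d, hd, M, hM⟩
    refine ⟨c * d, rcirc_mul hc hd, max N M, fun e he => ?_⟩
    have hx := hN e (le_trans (le_max_left _ _) he)
    have hy := hM e (le_trans (le_max_right _ _) he)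
    have hadd : (x + y) ^ p ^ e = x ^ p ^ e + y ^ p ^ e := add_pow_char_pow x y p e
    have : c * d * (x + y) ^ p ^ e = d * (c * x ^ p ^ e) + c * (d * y ^ p ^ e) := by
      rw [hadd]; ring
    rw [this]
    exact Submodule.add_mem _ (Ideal.mul_mem_left _ _ hx) (Ideal.mul_mem_left _ _ hy)
  smul_mem' := by
    rintro r x ⟨c, hc, N, hN⟩
    refine ⟨c, hc, N, fun e he => ?_⟩
    have : c * (r • x) ^ p ^ e = r ^ p ^ e * (c * x ^ p ^ e) := by
      simp [smul_eq_mul, mul_pow]; ring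
    rw [this]
    exact Ideal.mul_mem_left _ _ (hN e he)

/-- for every `s ≥ 1` there is `ε > 0` such that the weak `t`-closure of `I`
is constant for `t ∈ (s, s + ε]`, equal to the weak `(s+ε)`-closure. -/
theorem stmt15 {R : Type*} [CommRing R] [IsNoetherianRing R]
    (p : ℕ) (hp : p.Prime) (hcp : CharP R p)
    (I : Ideal R) (s : ℝ) (hs : 1 ≤ s) :
    ∃ ε : ℝ, 0 < ε ∧ ∀ t : ℝ, s < t → t ≤ s + ε → weakCl p I t = weakCl p I (s + ε) := by
  set f : ℕ →o Ideal R :=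
    ⟨fun n => weakClIdeal p hp hcp I (s + 1 / (n + 1)), by
      intro n m hnm
      have h1 : s + 1 / ((m : ℝ) + 1) ≤ s + 1 / ((n : ℝ) + 1) := by
        have : ((n : ℝ) + 1) ≤ (m : ℝ) + 1 := by exact_mod_cast Nat.add_le_add_right hnm 1
        have := one_div_le_one_div_of_le (by positivity) this
        linarith
      exact weakCl_anti p I h1⟩
  obtain ⟨n, hn⟩ := monotone_stabilizes_iff_noetherian.mpr inferInstance f
  refine ⟨1 / (n + 1), by positivity, fun t hst hts => ?_⟩
  apply Set.Subset.antisymm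
  · -- weakCl t ⊆ weakCl (s + 1/(n+1))
    obtain ⟨m, hm⟩ := exists_nat_one_div_lt (show (0 : ℝ) < t - s by linarith)
    have key : f (max m n) = f n := (hn (max m n) (le_max_right _ _)).symm
    have h1 : s + 1 / ((max m n : ℕ) + 1 : ℝ) ≤ t := by
      have h2 : (1 : ℝ) / ((max m n : ℕ) + 1) ≤ 1 / ((m : ℝ) + 1) := by
        have : ((m : ℝ) + 1) ≤ ((max m n : ℕ) : ℝ) + 1 := by
          exact_mod_cast Nat.add_le_add_right (le_max_left m n) 1
        exact one_div_le_one_div_of_le (by positivity) this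
      linarith
    have hsub : weakCl p I t ⊆ (f (max m n) : Set R) := weakCl_anti p I h1
    have : (f (max m n) : Set R) = (f n : Set R) := by rw [key]
    rw [this] at hsub
    exact hsub
  · exact weakCl_anti p I hts
end
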